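/- arXiv:1609.08311 — 3 statements merged into one kernel-verified Lean document; each statement's English description precedes it below -/
import Mathlib

section
/- Let r be a prime, let A be a noncyclic elementary abelian r-group acting on a (possibly infinite) group G, and let θ be an A-signalizer functor on G. Suppose N is a normal subgroup of G that is also a θ-subgroup. Let Ḡ = G/N with the induced action of A, and define θ̄(a) = θ(a)N/N for each a ∈ A∖{1}. Then: (i) θ̄ is an A-signalizer functor on Ḡ; (ii) θ̄(B) = θ(B)N/N for every nontrivial subgroup B ≤ A; (iii) θ is complete if and only if θ̄ is complete; and (iv) ‖θ̄‖ ≤ ‖θ‖, with equality if and only if N = 1. -/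
/-- The subgroup of fixed points of the action of `a` on `G`. -/
def fixedSub {A : Type*} (G : Type*) [Group A] [Group G] [MulDistribMulAction A G]
    (a : A) : Subgroup G where
  carrier := {g : G | a • g = g}
  one_mem' := smul_one a
  mul_mem' := by
    intro x y hx hy
    simp only [Set.mem_setOf_eq] at *
    rw [smul_mul', hx, hy]
  inv_mem' := by
    intro x hx
    simp only [Set.mem_setOf_eq] at *
    rw [smul_inv', hx]

/-- The commutator `[G, A]` of a group `G` with a group `A` acting on it:
the subgroup generated by all `g⁻¹ • (a • g)`. -/
def actCommutator (A G : Type*) [Group A] [Group G] [MulDistribMulAction A G] :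
    Subgroup G :=
  Subgroup.closure {x : G | ∃ (g : G) (a : A), x = g⁻¹ * (a • g)}

/-- An elementary abelian `r`-group: an abelian group in which every element has
order dividing `r`. -/
def IsElementaryAbelian (r : ℕ) (A : Type*) [Group A] : Prop :=
  (∀ x y : A, x * y = y * x) ∧ ∀ a : A, a ^ r = 1

open Pointwise

/-- `θ` is a signalizer functor with respect to the subgroup `B` of `A`:
for each `b ∈ B∖{1}`, `θ b` is a finite `B`-invariant subgroup of `C_G(b)` of
order coprime to `|B|`, and `θ b ⊓ C_G(b') ≤ θ b'` for all `b, b' ∈ B∖{1}`. -/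
def IsSignalizerFunctorOn {A G : Type*} [Group A] [Group G] [MulDistribMulAction A G]
    (B : Subgroup A) (θ : A → Subgroup G) : Prop :=
  ∀ a ∈ B, a ≠ 1 →
    Finite (θ a) ∧ (∀ b ∈ B, b • θ a = θ a) ∧ θ a ≤ fixedSub G a ∧
      (Nat.card (θ a)).Coprime (Nat.card B) ∧
      ∀ b ∈ B, b ≠ 1 → θ a ⊓ fixedSub G b ≤ θ b

/-- `K` is a completion of the signalizer functor `θ` restricted to `B`:
`K` is a finite `B`-invariant subgroup of order coprime to `|B|` with
`C_K(b) = θ b` for all `b ∈ B∖{1}`. -/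
def IsCompletionOn {A G : Type*} [Group A] [Group G] [MulDistribMulAction A G]
    (B : Subgroup A) (θ : A → Subgroup G) (K : Subgroup G) : Prop :=
  Finite K ∧ (∀ b ∈ B, b • K = K) ∧ (Nat.card K).Coprime (Nat.card B) ∧
    ∀ b ∈ B, b ≠ 1 → K ⊓ fixedSub G b = θ b

/-- A `θ`-subgroup: a finite `A`-invariant subgroup `H` of order coprime to `|A|`
with `C_H(a) ≤ θ a` for all `a ∈ A∖{1}`. -/
def IsThetaSubgroup {A G : Type*} [Group A] [Group G] [MulDistribMulAction A G]
    (θ : A → Subgroup G) (H : Subgroup G) : Prop :=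
  Finite H ∧ (∀ a : A, a • H = H) ∧ (Nat.card H).Coprime (Nat.card A) ∧
    ∀ a : A, a ≠ 1 → H ⊓ fixedSub G a ≤ θ a

/-- `θ(B) = ⋂_{b ∈ B∖{1}} θ b`. -/
def thetaB {A G : Type*} [Group A] [Group G] [MulDistribMulAction A G]
    (θ : A → Subgroup G) (B : Subgroup A) : Subgroup G :=
  ⨅ (b : A) (_ : b ∈ B ∧ b ≠ 1), θ b

/-- `‖θ‖ = |θ(A)| · ∏_{B ∈ hyp(A)} [θ(B) : θ(A)]`, where `hyp(A)` is the set of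
subgroups of `A` of index `r`. -/
noncomputable def signNorm {A G : Type*} [Group A] [Group G] [MulDistribMulAction A G]
    (r : ℕ) (θ : A → Subgroup G) : ℕ :=
  Nat.card (thetaB θ ⊤) *
    ∏ᶠ (B : Subgroup A) (_ : B.index = r), (thetaB θ ⊤).relIndex (thetaB θ B)


/-!
Everything rests on lifting fixed points through `G → G/N`: if `B ≤ A` is a `p`-group and `H` is a
`B`-invariant subgroup with `|H ∩ N|` prime to `p`, then `C_{HN/N}(B) = C_H(B)N/N`. This gives
(i)–(iii), and together with `θ(B) ∩ N = C_N(B)` it gives `|θ(B)| = |θ̄(B)| · |C_N(B)|`, hence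
`‖θ‖ = ‖θ̄‖ · ‖C_N‖` with `‖C_N‖ ≥ 1`. Equality forces `C_N(B) = 1` for every hyperplane `B`, and then
`N = 1`: otherwise the centre `Z` of an `A`-invariant Sylow subgroup of `N` is a nontrivial abelian
`A`-group with `C_Z(B) = 1` for all hyperplanes `B`, and an induction on the index using the norms
`∏ zⁱ • v` shows `C_Z(K) = 1` for every proper subgroup `K < A`, in particular `Z = C_Z(1) = 1`.
-/

section FixedPoints

variable {A G : Type*} [Group A] [Group G] [MulDistribMulAction A G]

theorem mem_fixedPoints_subgroup_iff {B : Subgroup A} {g : G} :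
    g ∈ FixedPoints.subgroup B G ↔ B ≤ MulAction.stabilizer A g :=
  ⟨fun h b hb => h ⟨b, hb⟩, fun h b => h b.2⟩

theorem fixedPoints_subgroup_le_fixedSub {B : Subgroup A} {b : A} (hb : b ∈ B) :
    FixedPoints.subgroup B G ≤ fixedSub G b :=
  fun _ hg => mem_fixedPoints_subgroup_iff.mp hg hb

theorem fixedSub_eq_fixedPoints_zpowers (a : A) :
    fixedSub G a = FixedPoints.subgroup (Subgroup.zpowers a) G := by
  ext g
  rw [mem_fixedPoints_subgroup_iff, Subgroup.zpowers_le]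
  exact MulAction.mem_stabilizer_iff.symm

theorem smul_mem_of_smul_eq {a : A} {H : Subgroup G} (hH : a • H = H) {g : G} (hg : g ∈ H) :
    a • g ∈ H :=
  hH ▸ Subgroup.smul_mem_pointwise_smul g a H hg

theorem smul_eq_of_mem_zpowers {a : A} {H : Subgroup G} (hH : a • H = H) :
    ∀ b ∈ Subgroup.zpowers a, b • H = H :=
  fun _ hb => Subgroup.zpowers_le.mpr (MulAction.mem_stabilizer_iff.mpr hH) hb

end FixedPoints

section ThetaB

variable {A G : Type*} [Group A] [Group G] [MulDistribMulAction A G]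

theorem mem_thetaB {θ : A → Subgroup G} {B : Subgroup A} {g : G} :
    g ∈ thetaB θ B ↔ ∀ b ∈ B, b ≠ 1 → g ∈ θ b := by
  simp only [thetaB, Subgroup.mem_iInf, and_imp]

theorem thetaB_top_le (θ : A → Subgroup G) (B : Subgroup A) : thetaB θ ⊤ ≤ thetaB θ B :=
  fun _ hg => mem_thetaB.mpr fun b _ hb => mem_thetaB.mp hg b (Subgroup.mem_top b) hb

theorem thetaB_le {θ : A → Subgroup G} {B : Subgroup A} {b : A} (hbB : b ∈ B) (hb : b ≠ 1) :
    thetaB θ B ≤ θ b :=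
  fun _ hg => mem_thetaB.mp hg b hbB hb

theorem thetaB_eq_inf_fixedPoints {θ : A → Subgroup G} {B : Subgroup A} {b₀ : A}
    (hb₀B : b₀ ∈ B) (hb₀ : b₀ ≠ 1) (hθ : ∀ b ∈ B, b ≠ 1 → θ b ≤ fixedSub G b)
    (hθb₀ : ∀ b ∈ B, b ≠ 1 → θ b₀ ⊓ fixedSub G b ≤ θ b) :
    thetaB θ B = θ b₀ ⊓ FixedPoints.subgroup B G := by
  refine le_antisymm (le_inf (thetaB_le hb₀B hb₀) fun g hg => ?_) fun g hg => ?_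
  · refine mem_fixedPoints_subgroup_iff.mpr fun b hbB => ?_
    by_cases hb : b = 1
    · simp [hb]
    · exact hθ b hbB hb (mem_thetaB.mp hg b hbB hb)
  · exact mem_thetaB.mpr fun b hbB hb =>
      hθb₀ b hbB hb ⟨hg.1, fixedPoints_subgroup_le_fixedSub hbB hg.2⟩

end ThetaB

namespace IsSignalizerFunctorOn

variable {A G : Type*} [Group A] [Group G] [MulDistribMulAction A G] {θ : A → Subgroup G}

theorem finite (hθ : IsSignalizerFunctorOn ⊤ θ) {a : A} (ha : a ≠ 1) : Finite (θ a) :=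
  (hθ a (Subgroup.mem_top a) ha).1

theorem smul_eq (hθ : IsSignalizerFunctorOn ⊤ θ) {a : A} (ha : a ≠ 1) (b : A) :
    b • θ a = θ a :=
  (hθ a (Subgroup.mem_top a) ha).2.1 b (Subgroup.mem_top b)

theorem le_fixedSub (hθ : IsSignalizerFunctorOn ⊤ θ) {a : A} (ha : a ≠ 1) :
    θ a ≤ fixedSub G a :=
  (hθ a (Subgroup.mem_top a) ha).2.2.1

theorem coprime (hθ : IsSignalizerFunctorOn ⊤ θ) {a : A} (ha : a ≠ 1) :
    (Nat.card (θ a)).Coprime (Nat.card A) :=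
  Subgroup.card_top (G := A) ▸ (hθ a (Subgroup.mem_top a) ha).2.2.2.1

theorem inf_fixedSub_le (hθ : IsSignalizerFunctorOn ⊤ θ) {a b : A} (ha : a ≠ 1) (hb : b ≠ 1) :
    θ a ⊓ fixedSub G b ≤ θ b :=
  (hθ a (Subgroup.mem_top a) ha).2.2.2.2 b (Subgroup.mem_top b) hb

theorem thetaB_eq (hθ : IsSignalizerFunctorOn ⊤ θ) {B : Subgroup A} {b₀ : A} (hb₀B : b₀ ∈ B)
    (hb₀ : b₀ ≠ 1) : thetaB θ B = θ b₀ ⊓ FixedPoints.subgroup B G :=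
  thetaB_eq_inf_fixedPoints hb₀B hb₀ (fun _ _ hb => hθ.le_fixedSub hb)
    fun _ _ hb => hθ.inf_fixedSub_le hb₀ hb

end IsSignalizerFunctorOn

section Subgroups

variable {G : Type*} [Group G]

theorem card_mul_relIndex {H K : Subgroup G} (h : H ≤ K) :
    Nat.card H * H.relIndex K = Nat.card K := by
  simpa only [Subgroup.relIndex_bot_left] using Subgroup.relIndex_mul_relIndex ⊥ H K bot_le h

theorem card_map_mk_mul_card_inf (N : Subgroup G) [N.Normal] (H : Subgroup G) :
    Nat.card (H.map (QuotientGroup.mk' N)) * Nat.card ↥(H ⊓ N) = Nat.card H := by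
  have h := Subgroup.relIndex_ker (K := H) (QuotientGroup.mk' N)
  rw [QuotientGroup.ker_mk'] at h
  rw [← h, ← Subgroup.inf_relIndex_right, inf_comm, mul_comm, card_mul_relIndex inf_le_left]

theorem card_comap_mk (N : Subgroup G) [N.Normal] (K : Subgroup (G ⧸ N)) :
    Nat.card (K.comap (QuotientGroup.mk' N)) = Nat.card K * Nat.card N := by
  have hN : N ≤ K.comap (QuotientGroup.mk' N) := by
    simpa only [QuotientGroup.ker_mk'] using Subgroup.ker_le_comap (QuotientGroup.mk' N) K
  rw [← card_map_mk_mul_card_inf N, inf_of_le_right hN,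
    Subgroup.map_comap_eq_self_of_surjective (QuotientGroup.mk'_surjective N)]

instance Subgroup.finite_map {G' : Type*} [Group G'] (H : Subgroup G) [Finite H] (f : G →* G') :
    Finite (H.map f) :=
  Finite.of_surjective _ (f.subgroupMap_surjective H)

theorem sup_normal_inf_eq {H N C : Subgroup G} [N.Normal] (hHC : H ≤ C) (hNC : N ⊓ C ≤ H) :
    (H ⊔ N) ⊓ C = H := by
  refine le_antisymm (fun g ⟨hg, hgC⟩ => ?_) (le_inf le_sup_left hHC)
  obtain ⟨h, hh, n, hn, rfl⟩ := Subgroup.mem_sup_of_normal_right.mp hg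
  have hnC : n ∈ C := (C.mul_mem_cancel_left (hHC hh)).mp hgC
  exact H.mul_mem hh (hNC ⟨hn, hnC⟩)

end Subgroups

section QuotientAction

variable {A G : Type*} [Group A] [Group G] [MulDistribMulAction A G] {N : Subgroup G} [N.Normal]
  [MulDistribMulAction A (G ⧸ N)]

theorem map_mk_pointwise_smul
    (hcompat : ∀ (a : A) (g : G), ((a • g : G) : G ⧸ N) = a • (g : G ⧸ N)) (a : A)
    (H : Subgroup G) :
    (a • H).map (QuotientGroup.mk' N) = a • H.map (QuotientGroup.mk' N) := by
  ext x
  simp only [Subgroup.mem_map, Subgroup.mem_smul_pointwise_iff_exists, QuotientGroup.mk'_apply]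
  constructor
  · rintro ⟨_, ⟨g, hg, rfl⟩, rfl⟩
    exact ⟨g, ⟨g, hg, rfl⟩, (hcompat a g).symm⟩
  · rintro ⟨_, ⟨g, hg, rfl⟩, rfl⟩
    exact ⟨a • g, ⟨g, hg, rfl⟩, hcompat a g⟩

theorem comap_mk_pointwise_smul
    (hcompat : ∀ (a : A) (g : G), ((a • g : G) : G ⧸ N) = a • (g : G ⧸ N)) (a : A)
    (K : Subgroup (G ⧸ N)) :
    (a • K).comap (QuotientGroup.mk' N) = a • K.comap (QuotientGroup.mk' N) := by
  ext g
  simp only [Subgroup.mem_pointwise_smul_iff_inv_smul_mem, Subgroup.mem_comap,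
    QuotientGroup.mk'_apply, hcompat]

theorem fixedSub_le_comap_mk
    (hcompat : ∀ (a : A) (g : G), ((a • g : G) : G ⧸ N) = a • (g : G ⧸ N)) (a : A) :
    fixedSub G a ≤ (fixedSub (G ⧸ N) a).comap (QuotientGroup.mk' N) :=
  fun g hg => (hcompat a g).symm.trans (congrArg _ hg)

/-- Each fibre of `H → HN/N` over a `B`-fixed point is a `B`-set of size `|H ∩ N|`, prime to `p`,
so it contains a fixed point. -/
theorem map_mk_inf_fixedPoints
    (hcompat : ∀ (a : A) (g : G), ((a • g : G) : G ⧸ N) = a • (g : G ⧸ N))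
    {p : ℕ} [Fact p.Prime] {B : Subgroup A} (hB : IsPGroup p B) {H : Subgroup G}
    (hH : ∀ b ∈ B, b • H = H) (hHN : ¬ p ∣ Nat.card ↥(H ⊓ N)) :
    (H ⊓ FixedPoints.subgroup B G).map (QuotientGroup.mk' N) =
      H.map (QuotientGroup.mk' N) ⊓ FixedPoints.subgroup B (G ⧸ N) := by
  refine le_antisymm (le_inf (Subgroup.map_mono inf_le_left) ?_) ?_
  · rintro _ ⟨g, ⟨-, hg⟩, rfl⟩ b
    exact (hcompat b g).symm.trans (congrArg _ (hg b))
  rintro _ ⟨⟨g₀, hg₀, rfl⟩, hfix⟩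
  have hfibre : ∀ g : G, g ∈ g₀ • ((H ⊓ N : Subgroup G) : Set G) ↔
      g ∈ H ∧ (g : G ⧸ N) = g₀ := fun g => by
    rw [Set.mem_smul_set_iff_inv_smul_mem, smul_eq_mul, SetLike.mem_coe, Subgroup.mem_inf,
      H.mul_mem_cancel_left (H.inv_mem hg₀), ← QuotientGroup.eq, eq_comm]
  let fibre : SubMulAction B G :=
    { carrier := g₀ • ((H ⊓ N : Subgroup G) : Set G)
      smul_mem' := fun b g hg => by
        obtain ⟨hgH, hgg₀⟩ := (hfibre g).mp hg
        refine (hfibre _).mpr ⟨smul_mem_of_smul_eq (hH b b.2) hgH, ?_⟩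
        rw [Subgroup.smul_def, hcompat, hgg₀]
        exact hfix b }
  have hcard : Nat.card fibre = Nat.card ↥(H ⊓ N) := Set.natCard_smul_set g₀ _
  obtain ⟨⟨g, hg⟩, hgfix⟩ := hB.nonempty_fixed_point_of_prime_not_dvd_card fibre (hcard ▸ hHN)
  obtain ⟨hgH, hgg₀⟩ := (hfibre g).mp hg
  exact ⟨g, ⟨hgH, fun b => congrArg Subtype.val (hgfix b)⟩, hgg₀⟩

theorem map_mk_inf_fixedSub
    (hcompat : ∀ (a : A) (g : G), ((a • g : G) : G ⧸ N) = a • (g : G ⧸ N))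
    {p : ℕ} [Fact p.Prime] (hA : IsPGroup p A) {a : A} {H : Subgroup G} (hH : a • H = H)
    (hHN : ¬ p ∣ Nat.card ↥(H ⊓ N)) :
    (H ⊓ fixedSub G a).map (QuotientGroup.mk' N) =
      H.map (QuotientGroup.mk' N) ⊓ fixedSub (G ⧸ N) a := by
  simp only [fixedSub_eq_fixedPoints_zpowers]
  exact map_mk_inf_fixedPoints hcompat (hA.to_subgroup _) (smul_eq_of_mem_zpowers hH) hHN

end QuotientAction

theorem IsPGroup.dvd_card_of_ne_one {p : ℕ} [Fact p.Prime] {A : Type*} [Group A]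
    (hA : IsPGroup p A) {a : A} (ha : a ≠ 1) : p ∣ Nat.card A :=
  (hA.dvd_orderOf ha).trans (orderOf_dvd_natCard a)

theorem isPGroup_of_pow_eq_one {A : Type*} [Group A] {p : ℕ} (hexp : ∀ a : A, a ^ p = 1) :
    IsPGroup p A :=
  fun a => ⟨1, by rw [pow_one, hexp]⟩

theorem not_dvd_card_inf_of_coprime {p n : ℕ} (hp : p.Prime) {G : Type*} [Group G]
    {H : Subgroup G} (hH : (Nat.card H).Coprime n) (hpn : p ∣ n) (K : Subgroup G) :
    ¬ p ∣ Nat.card ↥(H ⊓ K) := fun h =>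
  hp.one_lt.ne' (Nat.eq_one_of_dvd_coprimes hH (h.trans (Subgroup.card_dvd_of_le inf_le_left)) hpn)

section QuotientFunctor

variable {A G : Type*} [Group A] [Group G] [MulDistribMulAction A G] {N : Subgroup G}
  [N.Normal] [MulDistribMulAction A (G ⧸ N)] {p : ℕ} [hp : Fact p.Prime] {θ : A → Subgroup G}

theorem IsSignalizerFunctorOn.map_mk
    (hcompat : ∀ (a : A) (g : G), ((a • g : G) : G ⧸ N) = a • (g : G ⧸ N))
    (hA : IsPGroup p A) (hθ : IsSignalizerFunctorOn ⊤ θ) :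
    IsSignalizerFunctorOn ⊤ fun a => (θ a).map (QuotientGroup.mk' N) := by
  intro a _ ha
  have := hθ.finite ha
  refine ⟨inferInstance, fun b _ => by rw [← map_mk_pointwise_smul hcompat, hθ.smul_eq ha],
    Subgroup.map_le_iff_le_comap.mpr ((hθ.le_fixedSub ha).trans (fixedSub_le_comap_mk hcompat a)),
    Subgroup.card_top (G := A) ▸ (hθ.coprime ha).coprime_dvd_left (Subgroup.card_map_dvd _ _),
    fun b _ hb => ?_⟩
  rw [← map_mk_inf_fixedSub hcompat hA (hθ.smul_eq ha b)
    (not_dvd_card_inf_of_coprime hp.out (hθ.coprime ha) (hA.dvd_card_of_ne_one ha) N)]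
  exact Subgroup.map_mono (hθ.inf_fixedSub_le ha hb)

theorem IsSignalizerFunctorOn.thetaB_map_mk
    (hcompat : ∀ (a : A) (g : G), ((a • g : G) : G ⧸ N) = a • (g : G ⧸ N))
    (hA : IsPGroup p A) (hθ : IsSignalizerFunctorOn ⊤ θ) {B : Subgroup A} (hB : B ≠ ⊥) :
    thetaB (fun a => (θ a).map (QuotientGroup.mk' N)) B =
      (thetaB θ B).map (QuotientGroup.mk' N) := by
  obtain ⟨b₀, hb₀B, hb₀⟩ := (Subgroup.bot_or_exists_ne_one B).resolve_left hB
  rw [(hθ.map_mk hcompat hA).thetaB_eq hb₀B hb₀, hθ.thetaB_eq hb₀B hb₀,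
    map_mk_inf_fixedPoints hcompat (hA.to_subgroup B) (fun b _ => hθ.smul_eq hb₀ b)
      (not_dvd_card_inf_of_coprime hp.out (hθ.coprime hb₀) (hA.dvd_card_of_ne_one hb₀) N)]

theorem IsCompletionOn.map_mk
    (hcompat : ∀ (a : A) (g : G), ((a • g : G) : G ⧸ N) = a • (g : G ⧸ N))
    (hA : IsPGroup p A) {K : Subgroup G} (hK : IsCompletionOn ⊤ θ K) :
    IsCompletionOn ⊤ (fun a => (θ a).map (QuotientGroup.mk' N)) (K.map (QuotientGroup.mk' N)) := by
  obtain ⟨hKfin, hKinv, hKcop, hKθ⟩ := hK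
  rw [Subgroup.card_top] at hKcop
  refine ⟨inferInstance, fun b _ => by rw [← map_mk_pointwise_smul hcompat, hKinv b trivial],
    by rw [Subgroup.card_top]; exact hKcop.coprime_dvd_left (Subgroup.card_map_dvd _ _),
    fun b _ hb => ?_⟩
  rw [← map_mk_inf_fixedSub hcompat hA (hKinv b trivial)
    (not_dvd_card_inf_of_coprime hp.out hKcop (hA.dvd_card_of_ne_one hb) N), hKθ b trivial hb]

theorem IsCompletionOn.comap_mk
    (hcompat : ∀ (a : A) (g : G), ((a • g : G) : G ⧸ N) = a • (g : G ⧸ N))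
    (hθ : IsSignalizerFunctorOn ⊤ θ) (hN : IsThetaSubgroup θ N) {K : Subgroup (G ⧸ N)}
    (hK : IsCompletionOn ⊤ (fun a => (θ a).map (QuotientGroup.mk' N)) K) :
    IsCompletionOn ⊤ θ (K.comap (QuotientGroup.mk' N)) := by
  obtain ⟨hKfin, hKinv, hKcop, hKθ⟩ := hK
  obtain ⟨hNfin, -, hNcop, hNθ⟩ := hN
  rw [Subgroup.card_top] at hKcop
  have hcard := card_comap_mk N K
  refine ⟨Nat.finite_of_card_ne_zero (hcard ▸ mul_ne_zero Nat.card_pos.ne' Nat.card_pos.ne'),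
    fun b _ => by rw [← comap_mk_pointwise_smul hcompat, hKinv b trivial],
    by rw [Subgroup.card_top, hcard]; exact hKcop.mul_left hNcop, fun b _ hb => ?_⟩
  calc K.comap (QuotientGroup.mk' N) ⊓ fixedSub G b
      = (K ⊓ fixedSub (G ⧸ N) b).comap (QuotientGroup.mk' N) ⊓ fixedSub G b := by
        rw [Subgroup.comap_inf, inf_assoc, inf_of_le_right (fixedSub_le_comap_mk hcompat b)]
    _ = (θ b ⊔ N) ⊓ fixedSub G b := by
        rw [hKθ b trivial hb, Subgroup.comap_map_eq, QuotientGroup.ker_mk']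
    _ = θ b := sup_normal_inf_eq (hθ.le_fixedSub hb) (hNθ b hb)

end QuotientFunctor

theorem pow_notMem_of_notMem {G : Type*} [Group G] {p : ℕ} (hp : p.Prime) {H : Subgroup G}
    {g : G} (hg : g ^ p = 1) (hgH : g ∉ H) {j : ℕ} (hj0 : 0 < j) (hjp : j < p) : g ^ j ∉ H := by
  intro hgj
  obtain ⟨m, hm⟩ := exists_pow_eq_self_of_coprime (n := j) <|
    Nat.Coprime.coprime_dvd_right (orderOf_dvd_of_pow_eq_one hg)
      (Nat.coprime_comm.mp ((hp.coprime_iff_not_dvd).mpr (Nat.not_dvd_of_pos_of_lt hj0 hjp)))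
  exact hgH (hm ▸ H.pow_mem hgj m)

theorem mul_pow_notMem_of_notMem_sup_zpowers {G : Type*} [Group G] {p : ℕ} (hp : p.Prime)
    {K : Subgroup G} {x y : G} (hy : y ^ p = 1) (hx : x ∉ K) (hyK : y ∉ K ⊔ Subgroup.zpowers x)
    {i : ℕ} (hip : i < p) : x * y ^ i ∉ K := by
  intro hxy
  rcases Nat.eq_zero_or_pos i with rfl | hi0
  · exact hx (by simpa using hxy)
  · exact pow_notMem_of_notMem hp hy hyK hi0 hip
      (((K ⊔ Subgroup.zpowers x).mul_mem_cancel_left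
        (Subgroup.mem_sup_right (Subgroup.mem_zpowers x))).mp (Subgroup.mem_sup_left hxy))

theorem relIndex_sup_zpowers {A : Type*} [Group A] {p : ℕ} (hp : p.Prime) {K : Subgroup A}
    [K.Normal] {z : A} (hz : z ^ p = 1) (hzK : z ∉ K) :
    K.relIndex (K ⊔ Subgroup.zpowers z) = p := by
  rw [Subgroup.relIndex_sup_left]
  have hdvd : K.relIndex (Subgroup.zpowers z) ∣ p :=
    (Subgroup.relIndex_dvd_card _ _).trans (Nat.card_zpowers z ▸ orderOf_dvd_of_pow_eq_one hz)
  refine (hp.eq_one_or_self_of_dvd _ hdvd).resolve_left fun h => hzK ?_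
  exact Subgroup.relIndex_eq_one.mp h (Subgroup.mem_zpowers z)

theorem sup_zpowers_ne_top_and_index_lt {A : Type*} [Group A] [Finite A] {p : ℕ} (hp : p.Prime)
    {K : Subgroup A} [K.Normal] (hKp : K.index ≠ p) {z : A} (hz : z ^ p = 1) (hzK : z ∉ K) :
    K ⊔ Subgroup.zpowers z ≠ ⊤ ∧ (K ⊔ Subgroup.zpowers z).index < K.index := by
  have hidx := Subgroup.relIndex_mul_index (le_sup_left : K ≤ K ⊔ Subgroup.zpowers z)
  rw [relIndex_sup_zpowers hp hz hzK] at hidx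
  refine ⟨fun htop => hKp ?_, ?_⟩
  · rw [← hidx, htop, Subgroup.index_top, mul_one]
  · rw [← hidx]
    exact lt_mul_left (Nat.pos_of_ne_zero Subgroup.index_ne_zero_of_finite) hp.one_lt

section PowNorm

open scoped IsMulCommutative

variable {A V : Type*} [Group A] [CommGroup V] [MulDistribMulAction A V]

def powNorm (n : ℕ) (z : A) (v : V) : V :=
  ∏ i ∈ Finset.range n, z ^ i • v

theorem smul_powNorm_self {n : ℕ} {z : A} (hz : z ^ n = 1) (v : V) :
    z • powNorm n z v = powNorm n z v := by
  have h := (Finset.prod_range_succ' (fun i => z ^ i • v) n).symm.trans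
    (Finset.prod_range_succ (fun i => z ^ i • v) n)
  rw [hz, pow_zero] at h
  simp only [powNorm, Finset.smul_prod', smul_smul, ← pow_succ']
  exact mul_right_cancel h

theorem smul_powNorm_of_smul_eq [IsMulCommutative A] {k : A} {v : V} (hk : k • v = v) (n : ℕ)
    (z : A) : k • powNorm n z v = powNorm n z v := by
  simp only [powNorm, Finset.smul_prod', smul_smul, mul_comm k, mul_smul, hk]

theorem powNorm_one (n : ℕ) (v : V) : powNorm n (1 : A) v = v ^ n := by
  simp [powNorm]

/-- In `∏ᵢ ∏ⱼ (x yⁱ)ʲ • v` the terms with `j ≠ 0` regroup into `xʲ` times the norm along `yʲ`,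
leaving the `p` copies of `v` with `j = 0`. -/
theorem pow_eq_one_of_powNorm_eq_one [IsMulCommutative A] {p : ℕ} {x y : A} {v : V}
    (hx : ∀ i < p, powNorm p (x * y ^ i) v = 1)
    (hy : ∀ j, 0 < j → j < p → powNorm p (y ^ j) v = 1) : v ^ p = 1 := by
  have h : ∏ j ∈ Finset.range p, x ^ j • powNorm p (y ^ j) v = 1 := by
    rw [← Finset.prod_eq_one fun i hi => hx i (Finset.mem_range.mp hi)]
    simp only [powNorm, Finset.smul_prod', smul_smul]
    rw [Finset.prod_comm]
    refine Finset.prod_congr rfl fun j _ => Finset.prod_congr rfl fun i _ => ?_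
    rw [mul_pow, ← pow_mul, ← pow_mul, mul_comm i j]
  rwa [Finset.prod_eq_single 0 (fun j hj hj0 => by
      rw [hy j (Nat.pos_of_ne_zero hj0) (Finset.mem_range.mp hj), smul_one])
    (fun h0 => by simp_all [powNorm]), pow_zero, one_smul, pow_zero, powNorm_one] at h

end PowNorm

section Abelian

open scoped IsMulCommutative

variable {A V : Type*} [Group A] [Finite A] [IsMulCommutative A] [CommGroup V]
  [MulDistribMulAction A V] {p : ℕ}

theorem fixedPoints_subgroup_eq_bot_of_ne_top (hp : p.Prime) (hexp : ∀ a : A, a ^ p = 1)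
    (hV : (Nat.card V).Coprime p)
    (hhyp : ∀ B : Subgroup A, B.index = p → FixedPoints.subgroup B V = ⊥) :
    ∀ K : Subgroup A, K ≠ ⊤ → FixedPoints.subgroup K V = ⊥ := by
  suffices h : ∀ n, ∀ K : Subgroup A, K.index = n → K ≠ ⊤ → FixedPoints.subgroup K V = ⊥ from
    fun K => h _ K rfl
  intro n
  induction n using Nat.strong_induction_on with
  | _ n ih =>
  intro K hn hK
  by_cases hKp : K.index = p
  · exact hhyp K hKp
  have hsup := fun z => sup_zpowers_ne_top_and_index_lt hp hKp (hexp z)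
  refine eq_bot_iff.mpr fun v hv => Subgroup.mem_bot.mpr ?_
  have hnorm : ∀ z ∉ K, powNorm p z v = 1 := by
    intro z hz
    have hmem : powNorm p z v ∈ FixedPoints.subgroup ↥(K ⊔ Subgroup.zpowers z) V :=
      mem_fixedPoints_subgroup_iff.mpr (sup_le
        (fun k hk => smul_powNorm_of_smul_eq (mem_fixedPoints_subgroup_iff.mp hv hk) p z)
        (Subgroup.zpowers_le.mpr (smul_powNorm_self (hexp z) v)))
    rwa [ih _ (hn ▸ (hsup z hz).2) _ rfl (hsup z hz).1, Subgroup.mem_bot] at hmem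
  obtain ⟨x, hx⟩ := SetLike.exists_not_mem_of_ne_top K hK
  obtain ⟨y, hy⟩ := SetLike.exists_not_mem_of_ne_top _ (hsup x hx).1
  have hvp : v ^ p = 1 := pow_eq_one_of_powNorm_eq_one
    (fun i hi => hnorm _ (mul_pow_notMem_of_notMem_sup_zpowers hp (hexp y) hx hy hi))
    fun j h0 hjp => hnorm _ fun hj =>
      pow_notMem_of_notMem hp (hexp y) hy h0 hjp (Subgroup.mem_sup_left hj)
  exact (Nat.Coprime.pow_left_bijective hV).injective (hvp.trans (one_pow p).symm)

end Abelian

section InvariantSubgroups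

variable {A G : Type*} [Group A] [Group G] [MulDistribMulAction A G]

abbrev Subgroup.restrictMulDistribMulAction (H : Subgroup G)
    (hH : ∀ a : A, ∀ g ∈ H, a • g ∈ H) : MulDistribMulAction A H where
  smul a g := ⟨a • (g : G), hH a g g.2⟩
  one_smul g := Subtype.ext (one_smul A (g : G))
  mul_smul a b g := Subtype.ext (mul_smul a b (g : G))
  smul_mul a g h := Subtype.ext (smul_mul' a (g : G) h)
  smul_one a := Subtype.ext (smul_one a)

theorem exists_sylow_forall_smul_eq [Finite G] {p : ℕ} [Fact p.Prime] (hA : IsPGroup p A)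
    (hG : (Nat.card G).Coprime p) (q : ℕ) [Fact q.Prime] :
    ∃ P : Sylow q G, ∀ a : A, a • P = P := by
  have hdvd : Nat.card (Sylow q G) ∣ Nat.card G :=
    (Sylow.card_dvd_index (default : Sylow q G)).trans (Subgroup.index_dvd_card _)
  obtain ⟨P, hP⟩ := hA.nonempty_fixed_point_of_prime_not_dvd_card (Sylow q G) fun h =>
    (Fact.out : p.Prime).one_lt.ne' (Nat.eq_one_of_dvd_coprimes hG (h.trans hdvd) dvd_rfl)
  exact ⟨P, hP⟩

theorem isMulCommutative_inf_centralizer (Q : Subgroup G) :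
    IsMulCommutative ↥(Q ⊓ Subgroup.centralizer Q) :=
  Subgroup.le_centralizer_iff_isMulCommutative.mp
    (inf_le_right.trans (Subgroup.centralizer_le inf_le_left))

theorem inf_centralizer_ne_bot {q : ℕ} [Fact q.Prime] {Q : Subgroup G} [Finite Q]
    (hQ : IsPGroup q Q) (hQ1 : Q ≠ ⊥) : Q ⊓ Subgroup.centralizer Q ≠ ⊥ := by
  have := (Subgroup.nontrivial_iff_ne_bot Q).mpr hQ1
  obtain ⟨c, hc, hc1⟩ := (Subgroup.nontrivial_iff_exists_ne_one _).mp hQ.center_nontrivial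
  refine (Subgroup.ne_bot_iff_exists_ne_one).mpr ⟨⟨c, c.2, fun h hh => ?_⟩, ?_⟩
  · exact congrArg Subtype.val (Subgroup.mem_center_iff.mp hc ⟨h, hh⟩)
  · exact fun h => hc1 (Subtype.ext (congrArg Subtype.val h :))

theorem inf_centralizer_smul_mem {Q : Subgroup G} (hQ : ∀ a : A, ∀ g ∈ Q, a • g ∈ Q) (a : A)
    {g : G} (hg : g ∈ Q ⊓ Subgroup.centralizer Q) : a • g ∈ Q ⊓ Subgroup.centralizer Q := by
  refine ⟨hQ a g hg.1, fun h hh => ?_⟩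
  have hcomm := hg.2 _ (hQ a⁻¹ h hh)
  calc h * a • g = a • (a⁻¹ • h * g) := by rw [smul_mul', smul_inv_smul]
    _ = a • (g * a⁻¹ • h) := by rw [hcomm]
    _ = a • g * h := by rw [smul_mul', smul_inv_smul]

theorem exists_isPGroup_le_forall_smul_mem {p : ℕ} [Fact p.Prime] (hA : IsPGroup p A)
    {N : Subgroup G} [Finite N] (hN : ∀ a : A, a • N = N) (hNp : (Nat.card N).Coprime p)
    (hN1 : N ≠ ⊥) : ∃ q, q.Prime ∧ ∃ Q ≤ N, Q ≠ ⊥ ∧ IsPGroup q Q ∧ ∀ a : A, ∀ g ∈ Q, a • g ∈ Q := by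
  obtain ⟨q, hq, hqN⟩ := Nat.exists_prime_and_dvd (mt Subgroup.card_eq_one.mp hN1)
  have := Fact.mk hq
  let := N.restrictMulDistribMulAction fun a _ hg => smul_mem_of_smul_eq (hN a) hg
  obtain ⟨P, hP⟩ := exists_sylow_forall_smul_eq hA hNp q
  refine ⟨q, hq, (P : Subgroup N).map N.subtype, Subgroup.map_subtype_le _,
    (Subgroup.map_eq_bot_iff_of_injective _ N.subtype_injective).not.mpr (P.ne_bot_of_dvd_card hqN),
    P.isPGroup'.map N.subtype, ?_⟩
  rintro a _ ⟨n, hn, rfl⟩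
  refine ⟨a • n, ?_, rfl⟩
  rw [← hP a, Sylow.pointwise_smul_def]
  exact Subgroup.smul_mem_pointwise_smul n a _ hn

end InvariantSubgroups

theorem eq_bot_of_inf_fixedPoints_eq_bot {A G : Type*} [Group A] [Finite A] [IsMulCommutative A]
    [Nontrivial A] [Group G] [MulDistribMulAction A G] {p : ℕ} [Fact p.Prime]
    (hexp : ∀ a : A, a ^ p = 1) {N : Subgroup G} [Finite N] (hN : ∀ a : A, a • N = N)
    (hNp : (Nat.card N).Coprime p)
    (hfix : ∀ B : Subgroup A, B.index = p → N ⊓ FixedPoints.subgroup B G = ⊥) : N = ⊥ := by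
  by_contra hN1
  obtain ⟨q, hq, Q, hQN, hQ1, hQq, hQ⟩ :=
    exists_isPGroup_le_forall_smul_mem (isPGroup_of_pow_eq_one hexp) hN hNp hN1
  have := Fact.mk hq
  have : Finite Q := Finite.of_injective _ (Subgroup.inclusion_injective hQN)
  set Z := Q ⊓ Subgroup.centralizer Q
  have hZN : Z ≤ N := inf_le_left.trans hQN
  have := isMulCommutative_inf_centralizer Q
  let := Z.restrictMulDistribMulAction fun a _ => inf_centralizer_smul_mem hQ a
  have hZfix : ∀ B : Subgroup A, B.index = p → FixedPoints.subgroup B Z = ⊥ := fun B hB =>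
    eq_bot_iff.mpr fun v hv => Subtype.ext <| Subgroup.mem_bot.mp <|
      hfix B hB ▸ ⟨hZN v.2, fun b => congrArg Subtype.val (hv b)⟩
  have hbot := open scoped IsMulCommutative in
    fixedPoints_subgroup_eq_bot_of_ne_top Fact.out hexp
      (hNp.coprime_dvd_left (Subgroup.card_dvd_of_le hZN)) hZfix ⊥ bot_ne_top
  refine inf_centralizer_ne_bot hQq hQ1 (eq_bot_iff.mpr fun g hg => ?_)
  have hmem : (⟨g, hg⟩ : Z) ∈ FixedPoints.subgroup (⊥ : Subgroup A) Z := fun b => by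
    rw [Subgroup.smul_def, Subgroup.mem_bot.mp b.2, one_smul]
  rw [hbot, Subgroup.mem_bot] at hmem
  exact Subgroup.mem_bot.mpr (congrArg Subtype.val hmem)

section SignNorm

variable {A G : Type*} [Group A] [Group G] [MulDistribMulAction A G]

theorem IsSignalizerFunctorOn.finite_thetaB {θ : A → Subgroup G} (hθ : IsSignalizerFunctorOn ⊤ θ)
    {B : Subgroup A} (hB : B ≠ ⊥) : Finite (thetaB θ B) := by
  obtain ⟨b, hbB, hb⟩ := (Subgroup.bot_or_exists_ne_one B).resolve_left hB
  have := hθ.finite hb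
  exact Finite.of_injective _ (Subgroup.inclusion_injective (thetaB_le hbB hb))

theorem signNorm_ne_zero (r : ℕ) {θ : A → Subgroup G}
    (hθ : ∀ B : Subgroup A, B = ⊤ ∨ B.index = r → Finite (thetaB θ B)) : signNorm r θ ≠ 0 := by
  have hcard : ∀ B : Subgroup A, B = ⊤ ∨ B.index = r → Nat.card (thetaB θ B) ≠ 0 :=
    fun B hB => have := hθ B hB; Nat.card_pos.ne'
  refine mul_ne_zero (hcard ⊤ (Or.inl rfl)) (finprod_ne_zero fun B => ?_)
  rw [finprod_eq_if]
  split_ifs with hB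
  · exact fun h => hcard B (Or.inr hB) (Nat.eq_zero_of_zero_dvd (h ▸ Subgroup.relIndex_dvd_card _ _))
  · exact one_ne_zero

theorem signNorm_eq_one_iff [Finite A] (r : ℕ) {θ : A → Subgroup G} :
    signNorm r θ = 1 ↔ thetaB θ ⊤ = ⊥ ∧ ∀ B : Subgroup A, B.index = r → thetaB θ B = ⊥ := by
  constructor
  · intro h
    have htop : thetaB θ ⊤ = ⊥ := Subgroup.card_eq_one.mp (Nat.eq_one_of_mul_eq_one_right h)
    refine ⟨htop, fun B hB => ?_⟩
    have hdvd : (thetaB θ ⊤).relIndex (thetaB θ B) ∣ 1 := by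
      rw [← Nat.eq_one_of_mul_eq_one_left h]
      refine (dvd_of_eq ?_).trans (finprod_mem_dvd B (Set.toFinite _))
      rw [finprod_eq_if, if_pos hB]
    rw [← le_bot_iff, ← htop]
    exact Subgroup.relIndex_eq_one.mp (Nat.dvd_one.mp hdvd)
  · rintro ⟨htop, hB⟩
    rw [signNorm, htop, Subgroup.card_bot, one_mul]
    exact finprod_mem_eq_one_of_forall_eq_one (s := {B : Subgroup A | B.index = r}) fun B hB' => by
      rw [hB B hB', Subgroup.relIndex_self]

theorem signNorm_mul [Finite A] {G₁ G₂ : Type*} [Group G₁] [MulDistribMulAction A G₁] [Group G₂]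
    [MulDistribMulAction A G₂] (r : ℕ) {θ : A → Subgroup G} {θ₁ : A → Subgroup G₁}
    {θ₂ : A → Subgroup G₂}
    (hcard : ∀ B : Subgroup A, B = ⊤ ∨ B.index = r →
      Nat.card (thetaB θ B) = Nat.card (thetaB θ₁ B) * Nat.card (thetaB θ₂ B))
    (h₁ : Nat.card (thetaB θ₁ ⊤) ≠ 0) (h₂ : Nat.card (thetaB θ₂ ⊤) ≠ 0) :
    signNorm r θ = signNorm r θ₁ * signNorm r θ₂ := by
  have hrel : ∀ B : Subgroup A, B.index = r → (thetaB θ ⊤).relIndex (thetaB θ B) =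
      (thetaB θ₁ ⊤).relIndex (thetaB θ₁ B) * (thetaB θ₂ ⊤).relIndex (thetaB θ₂ B) := by
    intro B hB
    refine Nat.eq_of_mul_eq_mul_left
      (Nat.pos_of_ne_zero (hcard ⊤ (Or.inl rfl) ▸ mul_ne_zero h₁ h₂)) ?_
    rw [card_mul_relIndex (thetaB_top_le θ B), hcard ⊤ (Or.inl rfl), hcard B (Or.inr hB),
      ← card_mul_relIndex (thetaB_top_le θ₁ B), ← card_mul_relIndex (thetaB_top_le θ₂ B)]
    ring
  rw [signNorm, signNorm, signNorm, hcard ⊤ (Or.inl rfl),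
    finprod_congr fun B => finprod_congr fun hB => hrel B hB,
    show ∀ f g : Subgroup A → ℕ, ∏ᶠ (B) (_ : B.index = r), f B * g B =
      (∏ᶠ (B) (_ : B.index = r), f B) * ∏ᶠ (B) (_ : B.index = r), g B from
      fun f g => finprod_mem_mul_distrib (Set.toFinite {B : Subgroup A | B.index = r})]
  ring

end SignNorm

theorem ne_bot_of_eq_top_or_index_eq {A : Type*} [Group A] [Nontrivial A] {p : ℕ}
    (hAp : Nat.card A ≠ p) {B : Subgroup A} (hB : B = ⊤ ∨ B.index = p) : B ≠ ⊥ := by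
  rcases hB with rfl | hBp
  · exact top_ne_bot
  · exact fun hB => hAp (Subgroup.index_bot (G := A) ▸ hB ▸ hBp)

section CentralizerFunctor

variable {A G : Type*} [Group A] [Group G] [MulDistribMulAction A G]

theorem inf_fixedPoints_le_thetaB (N : Subgroup G) (B : Subgroup A) :
    N ⊓ FixedPoints.subgroup B G ≤ thetaB (fun a : A => N ⊓ fixedSub G a) B :=
  fun _ hg => mem_thetaB.mpr fun _ hbB _ => ⟨hg.1, fixedPoints_subgroup_le_fixedSub hbB hg.2⟩

theorem thetaB_inf_fixedSub_le (N : Subgroup G) {B : Subgroup A} (hB : B ≠ ⊥) :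
    thetaB (fun a : A => N ⊓ fixedSub G a) B ≤ N := by
  obtain ⟨b, hbB, hb⟩ := (Subgroup.bot_or_exists_ne_one B).resolve_left hB
  exact (thetaB_le hbB hb).trans inf_le_left

theorem finite_thetaB_inf_fixedSub (N : Subgroup G) [Finite N] {B : Subgroup A} (hB : B ≠ ⊥) :
    Finite (thetaB (fun a : A => N ⊓ fixedSub G a) B) :=
  Finite.of_injective _ (Subgroup.inclusion_injective (thetaB_inf_fixedSub_le N hB))

theorem thetaB_inf_eq {θ : A → Subgroup G} (hθ : IsSignalizerFunctorOn ⊤ θ) {N : Subgroup G}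
    (hN : IsThetaSubgroup θ N) {B : Subgroup A} (hB : B ≠ ⊥) :
    thetaB θ B ⊓ N = thetaB (fun a : A => N ⊓ fixedSub G a) B := by
  obtain ⟨b₀, hb₀B, hb₀⟩ := (Subgroup.bot_or_exists_ne_one B).resolve_left hB
  ext g
  simp only [Subgroup.mem_inf, mem_thetaB]
  exact ⟨fun ⟨hg, hgN⟩ b hbB hb => ⟨hgN, hθ.le_fixedSub hb (hg b hbB hb)⟩,
    fun hg => ⟨fun b hbB hb => hN.2.2.2 b hb (hg b hbB hb), (hg b₀ hb₀B hb₀).1⟩⟩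

theorem signNorm_inf_fixedSub_eq_one_iff [Finite A] [IsMulCommutative A] [Nontrivial A] {p : ℕ}
    [Fact p.Prime] (hexp : ∀ a : A, a ^ p = 1) (hAp : Nat.card A ≠ p) {N : Subgroup G} [Finite N]
    (hN : ∀ a : A, a • N = N) (hNp : (Nat.card N).Coprime p) :
    signNorm p (fun a : A => N ⊓ fixedSub G a) = 1 ↔ N = ⊥ := by
  rw [signNorm_eq_one_iff]
  constructor
  · rintro ⟨-, hB⟩
    exact eq_bot_of_inf_fixedPoints_eq_bot hexp hN hNp fun B hBp =>
      le_bot_iff.mp ((inf_fixedPoints_le_thetaB N B).trans (hB B hBp).le)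
  · rintro rfl
    have h : ∀ B : Subgroup A, B ≠ ⊥ → thetaB (fun a : A => ⊥ ⊓ fixedSub G a) B = ⊥ :=
      fun B hB => le_bot_iff.mp (thetaB_inf_fixedSub_le ⊥ hB)
    exact ⟨h ⊤ (ne_bot_of_eq_top_or_index_eq hAp (Or.inl rfl)),
      fun B hBp => h B (ne_bot_of_eq_top_or_index_eq hAp (Or.inr hBp))⟩

end CentralizerFunctor

section QuotientNorm

variable {A G : Type*} [Group A] [Finite A] [Group G] [MulDistribMulAction A G] {N : Subgroup G}
  [N.Normal] [MulDistribMulAction A (G ⧸ N)] {p : ℕ} [Fact p.Prime] {θ : A → Subgroup G}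

theorem signNorm_eq_signNorm_map_mk_mul [Nontrivial A]
    (hcompat : ∀ (a : A) (g : G), ((a • g : G) : G ⧸ N) = a • (g : G ⧸ N))
    (hA : IsPGroup p A) (hAp : Nat.card A ≠ p) (hθ : IsSignalizerFunctorOn ⊤ θ)
    (hN : IsThetaSubgroup θ N) :
    signNorm p θ = signNorm p (fun a => (θ a).map (QuotientGroup.mk' N)) *
      signNorm p (fun a : A => N ⊓ fixedSub G a) := by
  have hne := fun B => ne_bot_of_eq_top_or_index_eq (B := B) hAp
  have := hN.1
  have := (hθ.map_mk hcompat hA).finite_thetaB (hne ⊤ (Or.inl rfl))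
  have := finite_thetaB_inf_fixedSub N (hne ⊤ (Or.inl rfl))
  refine signNorm_mul p (fun B hB => ?_) Nat.card_pos.ne' Nat.card_pos.ne'
  rw [hθ.thetaB_map_mk hcompat hA (hne B hB), ← thetaB_inf_eq hθ hN (hne B hB),
    card_map_mk_mul_card_inf]

theorem signNorm_map_mk_le_and_eq_iff [IsMulCommutative A] [Nontrivial A]
    (hcompat : ∀ (a : A) (g : G), ((a • g : G) : G ⧸ N) = a • (g : G ⧸ N))
    (hexp : ∀ a : A, a ^ p = 1) (hAp : Nat.card A ≠ p) (hθ : IsSignalizerFunctorOn ⊤ θ)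
    (hN : IsThetaSubgroup θ N) :
    signNorm p (fun a => (θ a).map (QuotientGroup.mk' N)) ≤ signNorm p θ ∧
      (signNorm p (fun a => (θ a).map (QuotientGroup.mk' N)) = signNorm p θ ↔ N = ⊥) := by
  have hA := isPGroup_of_pow_eq_one hexp
  have hne := fun B => ne_bot_of_eq_top_or_index_eq (B := B) hAp
  have := hN.1
  have hNp : (Nat.card N).Coprime p :=
    hN.2.2.1.coprime_dvd_right (hA.dvd_card_of_ne_one (exists_ne (1 : A)).choose_spec)
  have hbar := signNorm_ne_zero p fun B hB => (hθ.map_mk hcompat hA).finite_thetaB (hne B hB)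
  have hcent := signNorm_ne_zero p fun B hB => finite_thetaB_inf_fixedSub N (hne B hB)
  rw [signNorm_eq_signNorm_map_mk_mul hcompat hA hAp hθ hN, eq_comm, mul_eq_left₀ hbar,
    signNorm_inf_fixedSub_eq_one_iff hexp hAp hN.2.1 hNp]
  exact ⟨Nat.le_mul_of_pos_right _ (Nat.pos_of_ne_zero hcent), Iff.rfl⟩

end QuotientNorm

/-- Let `A` be a noncyclic elementary abelian `r`-group acting on a (possibly
infinite) group `G`, `θ` an `A`-signalizer functor on `G`, and `N` a normal
`θ`-subgroup of `G`.  Give `Ḡ = G/N` the induced `A`-action and set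
`θ̄(a) = θ(a)N/N`.  Then: (i) `θ̄` is an `A`-signalizer functor on `Ḡ`;
(ii) `θ̄(B) = θ(B)N/N` for every nontrivial `B ≤ A`; (iii) `θ` is complete iff
`θ̄` is complete; (iv) `‖θ̄‖ ≤ ‖θ‖`, with equality iff `N = 1`. -/
theorem quotient_signalizer_functor
    {A G : Type*} [Group A] [Finite A] [Group G] [MulDistribMulAction A G]
    (r : ℕ) (hr : r.Prime) (hA : IsElementaryAbelian r A) (hnc : ¬ IsCyclic A)
    (θ : A → Subgroup G) (hθ : IsSignalizerFunctorOn ⊤ θ)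
    (N : Subgroup G) [N.Normal] (hNθ : IsThetaSubgroup θ N)
    [MulDistribMulAction A (G ⧸ N)]
    (hcompat : ∀ (a : A) (g : G), ((a • g : G) : G ⧸ N) = a • (g : G ⧸ N))
    (θbar : A → Subgroup (G ⧸ N))
    (hθbar : ∀ a : A, θbar a = (θ a).map (QuotientGroup.mk' N)) :
    IsSignalizerFunctorOn ⊤ θbar ∧
      (∀ B : Subgroup A, B ≠ ⊥ →
        thetaB θbar B = (thetaB θ B).map (QuotientGroup.mk' N)) ∧
      ((∃ K : Subgroup G, IsCompletionOn ⊤ θ K) ↔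
        (∃ Kbar : Subgroup (G ⧸ N), IsCompletionOn ⊤ θbar Kbar)) ∧
      (signNorm r θbar ≤ signNorm r θ ∧
        (signNorm r θbar = signNorm r θ ↔ N = ⊥)) := by
  obtain ⟨hcomm, hexp⟩ := hA
  have := Fact.mk hr
  have : IsMulCommutative A := ⟨⟨hcomm⟩⟩
  have : Nontrivial A := not_subsingleton_iff_nontrivial.mp fun _ => hnc isCyclic_of_subsingleton
  have hpA := isPGroup_of_pow_eq_one hexp
  obtain rfl : θbar = fun a => (θ a).map (QuotientGroup.mk' N) := funext hθbar
  exact ⟨hθ.map_mk hcompat hpA, fun B hB => hθ.thetaB_map_mk hcompat hpA hB,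
    ⟨fun ⟨K, hK⟩ => ⟨_, hK.map_mk hcompat hpA⟩, fun ⟨K, hK⟩ => ⟨_, hK.comap_mk hcompat hθ hNθ⟩⟩,
    signNorm_map_mk_le_and_eq_iff hcompat hexp (fun h => hnc (isCyclic_of_prime_card h)) hθ hNθ⟩
end

section
/- Let r be a prime, let A be a noncyclic elementary abelian r-group acting on a (possibly infinite) group G, and let θ be an A-signalizer functor on G. Then for every a ∈ A∖{1}, θ(a) = ⟨θ(B) : B ∈ hyp(A) and a ∈ B⟩. -/
open Pointwise

/-!
`θ(a)` is a finite `A`-invariant group of order prime to `r`, so by the coprime-action generation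
theorem it is generated by the centralizers `C_{θ(a)}(B)`, `B ∈ hyp(A)`. When `a ∈ B` the
signalizer axiom puts `C_{θ(a)}(B)` inside `θ(B)`; when `a ∉ B`, `A = B⟨a⟩` centralizes
`C_{θ(a)}(B)`, which then lies in `θ(B')` for every hyperplane `B' ∋ a`.

The generation theorem `H = ⟨C_H(B) : B ∈ hyp(A)⟩` (for `A` noncyclic elementary abelian and
`r ∤ |H|`) goes by induction on `|H|`. Proper `A`-invariant subgroups are covered by induction, and
an `A`-invariant normal subgroup `1 < N < H` reduces the claim to `H/N`, because in coprime action
fixed points of `H/N` lift to fixed points of `H`. If there is no such `N`, each `A`-invariant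
Sylow subgroup is proper or all of `H`; in the latter case `H` is a `q`-group, so its centre is all
of `H`. For abelian `H` without `A`-invariant subgroups other than `1` and `H`, every element of
`A` outside the kernel `K` of the action is fixed-point-free; if `K` contained no hyperplane, there
would be `x, y ∈ A` with `x` and all `x^i y` fixed-point-free, and multiplying the (trivial) norms
of the `x^i y` on `h` gives `h^r = 1`, contradicting `r ∤ |H|`.
-/

theorem nontrivial_of_not_isCyclic {A : Type*} [Group A] (hnc : ¬ IsCyclic A) : Nontrivial A :=
  not_subsingleton_iff_nontrivial.mp fun _ => hnc isCyclic_of_subsingleton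

theorem IsElementaryAbelian.isPGroup {r : ℕ} {A : Type*} [Group A]
    (hA : IsElementaryAbelian r A) : IsPGroup r A :=
  fun a => ⟨1, by rw [pow_one]; exact hA.2 a⟩

theorem IsElementaryAbelian.normal {r : ℕ} {A : Type*} [Group A]
    (hA : IsElementaryAbelian r A) (N : Subgroup A) : N.Normal :=
  ⟨fun n hn g => by rwa [hA.1 g n, mul_inv_cancel_right]⟩

theorem IsPGroup.exists_index_eq_le {p : ℕ} [Fact p.Prime] {A : Type*} [Group A] [Finite A]
    (hA : IsPGroup p A) {N : Subgroup A} [N.Normal] (hN : N ≠ ⊤) :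
    ∃ B : Subgroup A, B.index = p ∧ N ≤ B := by
  obtain ⟨k, hk⟩ := (hA.to_quotient N).exists_card_eq
  have hk0 : k ≠ 0 := by
    rintro rfl
    rw [pow_zero, ← Subgroup.index_eq_card, Subgroup.index_eq_one] at hk
    exact hN hk
  obtain ⟨C, hC⟩ := Sylow.exists_subgroup_card_pow_prime (G := A ⧸ N) p (n := k - 1)
    (hk ▸ pow_dvd_pow p (Nat.sub_le k 1))
  refine ⟨C.comap (QuotientGroup.mk' N), ?_, fun x hx => ?_⟩
  · rw [Subgroup.index_comap_of_surjective _ (QuotientGroup.mk'_surjective N)]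
    have h := C.card_mul_index
    rw [hC, hk, ← Nat.sub_one_add_one hk0, pow_succ] at h
    exact Nat.eq_of_mul_eq_mul_left (pow_pos (Fact.out : p.Prime).pos _) h
  · simp [(QuotientGroup.eq_one_iff x).mpr hx, C.one_mem]

theorem Subgroup.sup_zpowers_eq_top_of_index_eq_prime {p : ℕ} (hp : p.Prime) {A : Type*}
    [Group A] {B : Subgroup A} (hB : B.index = p) {a : A} (ha : a ∉ B) :
    B ⊔ Subgroup.zpowers a = ⊤ := by
  have hle : B ≤ B ⊔ Subgroup.zpowers a := le_sup_left
  rcases hp.eq_one_or_self_of_dvd _ (hB ▸ Subgroup.index_dvd_of_le hle) with h | h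
  · exact Subgroup.index_eq_one.mp h
  · have hrel := Subgroup.relIndex_mul_index hle
    rw [h, hB, Nat.mul_eq_right hp.ne_zero, Subgroup.relIndex_eq_one] at hrel
    exact absurd (hrel (Subgroup.mem_sup_right (Subgroup.mem_zpowers a))) ha

theorem IsElementaryAbelian.exists_index_eq_mem {r : ℕ} [Fact r.Prime] {A : Type*} [Group A]
    [Finite A] (hA : IsElementaryAbelian r A) (hnc : ¬ IsCyclic A) (a : A) :
    ∃ B : Subgroup A, B.index = r ∧ a ∈ B := by
  have := hA.normal (Subgroup.zpowers a)
  have htop : Subgroup.zpowers a ≠ ⊤ := fun h => hnc ⟨a, (Subgroup.eq_top_iff' _).mp h⟩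
  obtain ⟨B, hB, hle⟩ := hA.isPGroup.exists_index_eq_le htop
  exact ⟨B, hB, hle (Subgroup.mem_zpowers a)⟩

def Subgroup.IsInvariant (A : Type*) {H : Type*} [Group H] [SMul A H] (N : Subgroup H) : Prop :=
  ∀ (a : A), ∀ x ∈ N, a • x ∈ N

namespace Subgroup

variable {A H : Type*} [Group A] [Group H] [MulDistribMulAction A H]

theorem isInvariant_of_smul_eq {N : Subgroup H} (hN : ∀ a : A, a • N = N) : N.IsInvariant A :=
  fun a x hx => hN a ▸ Subgroup.smul_mem_pointwise_smul x a N hx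

variable (A) in
theorem isInvariant_center : (center H).IsInvariant A := by
  intro a z hz
  rw [mem_center_iff] at hz ⊢
  intro g
  rw [← smul_inv_smul a g, ← smul_mul', ← smul_mul', hz]

theorem isInvariant_fixedSub_of_commute {z : A} (hz : ∀ a : A, Commute a z) :
    (fixedSub H z).IsInvariant A := by
  intro a w hw
  change z • a • w = a • w
  rw [← mul_smul, ← (hz a).eq, mul_smul, hw]

abbrev IsInvariant.mulDistribMulAction {N : Subgroup H} (hN : N.IsInvariant A) :
    MulDistribMulAction A N :=
  letI : SMul A N := ⟨fun a x => ⟨a • (x : H), hN a x x.2⟩⟩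
  N.subtype_injective.mulDistribMulAction N.subtype fun _ _ => rfl

abbrev IsInvariant.quotientMulDistribMulAction {N : Subgroup H} [N.Normal]
    (hN : N.IsInvariant A) : MulDistribMulAction A (H ⧸ N) :=
  letI : SMul A (H ⧸ N) :=
    ⟨fun a => QuotientGroup.map N N (MulDistribMulAction.toMonoidHom H a) (hN a)⟩
  (QuotientGroup.mk'_surjective N).mulDistribMulAction (QuotientGroup.mk' N) fun _ _ => rfl

end Subgroup

theorem IsPGroup.exists_isInvariant_sylow {p : ℕ} [Fact p.Prime] {A H : Type*} [Group A]
    [Group H] [Finite H] [MulDistribMulAction A H] (hA : IsPGroup p A) (hH : ¬ p ∣ Nat.card H)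
    (q : ℕ) [Fact q.Prime] :
    ∃ Q : Sylow q H, (Q : Subgroup H).IsInvariant A := by
  have hnd : ¬ p ∣ Nat.card (Sylow q H) := fun h =>
    hH (h.trans ((Sylow.card_dvd_index default).trans (Subgroup.index_dvd_card _)))
  obtain ⟨Q, hQ⟩ := hA.nonempty_fixed_point_of_prime_not_dvd_card (Sylow q H) hnd
  exact ⟨Q, Subgroup.isInvariant_of_smul_eq fun a => by rw [← Sylow.pointwise_smul_def, hQ a]⟩

theorem Subgroup.eq_top_of_forall_sylow_le {H : Type*} [Group H] [Finite H] (S : Subgroup H)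
    (h : ∀ q : ℕ, q.Prime → ∃ Q : Sylow q H, (Q : Subgroup H) ≤ S) : S = ⊤ := by
  rw [← Subgroup.index_eq_one]
  by_contra hne
  obtain ⟨q, hq, hdvd⟩ := Nat.exists_prime_and_dvd hne
  have := Fact.mk hq
  obtain ⟨Q, hQ⟩ := h q hq
  exact Q.not_dvd_index (hdvd.trans (Subgroup.index_dvd_of_le hQ))

theorem IsPGroup.exists_fixed_mk_eq {p : ℕ} [Fact p.Prime] {P H : Type*} [Group P] [Group H]
    [Finite H] [MulDistribMulAction P H] (hP : IsPGroup p P) (hH : ¬ p ∣ Nat.card H)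
    {N : Subgroup H} (hN : N.IsInvariant P) {x : H}
    (hx : ∀ g : P, ((g • x : H) : H ⧸ N) = x) :
    ∃ y : H, (y : H ⧸ N) = x ∧ ∀ g : P, g • y = y := by
  let X := ↥(x • (N : Set H))
  let _ : MulAction P X :=
    { smul := fun g y => ⟨g • (y : H), by
        have h := N.mul_mem (QuotientGroup.eq.mp (hx g).symm)
          (hN g _ ((mem_leftCoset_iff x).mp y.2))
        rw [smul_mul', smul_inv', mul_assoc, mul_inv_cancel_left] at h
        exact (mem_leftCoset_iff x).mpr h⟩
      one_smul := fun y => Subtype.ext (one_smul P (y : H))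
      mul_smul := fun g g' y => Subtype.ext (mul_smul g g' (y : H)) }
  have hX : ¬ p ∣ Nat.card X := by
    rw [Set.natCard_smul_set]
    exact fun h => hH (h.trans N.card_subgroup_dvd_card)
  obtain ⟨⟨y, hy⟩, hfix⟩ := hP.nonempty_fixed_point_of_prime_not_dvd_card X hX
  refine ⟨y, (QuotientGroup.eq.mpr ((mem_leftCoset_iff x).mp hy)).symm, fun g => ?_⟩
  exact congrArg Subtype.val (hfix g)

section FixedPointFree

open MonoidHom

variable {A H : Type*} [Group A] [CommGroup H] [MulDistribMulAction A H] {r : ℕ} [Fact r.Prime]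

theorem prod_pow_val_smul_eq_one {z : A} (hz : z ^ r = 1) (hf : FixedPointFree (z • · : H → H))
    (h : H) : ∏ i : ZMod r, z ^ i.val • h = 1 := by
  apply hf
  dsimp only
  rw [Finset.smul_prod']
  refine Fintype.prod_equiv (Equiv.addRight 1) _ _ fun i => ?_
  rw [← mul_smul, ← pow_succ', Equiv.coe_addRight, ZMod.val_add, ZMod.val_one,
    ← pow_eq_pow_mod _ hz]

theorem pow_eq_one_of_fixedPointFree {x y : A} (hxy : Commute x y) (hx : x ^ r = 1)
    (hy : y ^ r = 1) (hxf : FixedPointFree (x • · : H → H))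
    (hxyf : ∀ i : ℕ, FixedPointFree ((x ^ i * y) • · : H → H)) (h : H) : h ^ r = 1 := by
  -- Column `k` of the grid `F` is the norm of `x` on `y ^ k • h`, and `k ↦ F (i * k) k` is the
  -- norm of `x ^ i * y` on `h`. All of these are trivial, and the product of the latter over all
  -- `i`, regrouped by columns, is `h ^ r` times trivial columns.
  set F : ZMod r → ZMod r → H := fun i k => (x ^ i.val * y ^ k.val) • h
  have hcol (k : ZMod r) : ∏ i, F i k = 1 := by
    simp only [F, mul_smul]
    exact prod_pow_val_smul_eq_one hx hxf _
  have hrow (i : ZMod r) : ∏ k, F (i * k) k = 1 := by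
    have hpow : (x ^ i.val * y) ^ r = 1 := by
      rw [(hxy.pow_left _).mul_pow, pow_right_comm, hx, one_pow, one_mul, hy]
    rw [← prod_pow_val_smul_eq_one hpow (hxyf i.val) h]
    refine Finset.prod_congr rfl fun k _ => ?_
    rw [(hxy.pow_left _).mul_pow, ← pow_mul]
    simp only [F]
    rw [ZMod.val_mul, ← pow_eq_pow_mod _ hx]
  have hdiag : ∏ k, ∏ i, F (i * k) k = h ^ r := by
    rw [Fintype.prod_eq_single 0 fun k hk => ?_]
    · simp [F, ZMod.card]
    rw [← hcol k]
    exact Equiv.prod_comp (Equiv.mulRight₀ k hk) fun i => F i k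
  rw [← hdiag, Finset.prod_comm]
  exact Finset.prod_eq_one fun i _ => hrow i

end FixedPointFree

theorem IsElementaryAbelian.exists_index_eq_fixedPoints_eq_top {r : ℕ} [Fact r.Prime]
    {A H : Type*} [Group A] [Finite A] [Nontrivial A] [CommGroup H] [Finite H] [Nontrivial H]
    [MulDistribMulAction A H] (hA : IsElementaryAbelian r A) (hH : ¬ r ∣ Nat.card H)
    (hsimple : ∀ N : Subgroup H, N.IsInvariant A → N = ⊥ ∨ N = ⊤) :
    ∃ B : Subgroup A, B.index = r ∧ FixedPoints.subgroup B H = ⊤ := by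
  set K := ⨅ h : H, MulAction.stabilizer A h
  have hK (z : A) : z ∈ K ↔ ∀ h : H, z • h = h := by
    simp only [K, Subgroup.mem_iInf, MulAction.mem_stabilizer_iff]
  suffices ∃ B : Subgroup A, B.index = r ∧ B ≤ K by
    obtain ⟨B, hB, hBK⟩ := this
    refine ⟨B, hB, eq_top_iff.mpr fun h _ => ?_⟩
    exact (FixedPoints.mem_subgroup B H h).mpr fun b => (hK b).mp (hBK b.2) h
  by_contra! hno
  have := hA.normal K
  have hKtop : K ≠ ⊤ := by
    intro hKtop
    obtain ⟨B, hB, -⟩ := hA.isPGroup.exists_index_eq_le (bot_ne_top : (⊥ : Subgroup A) ≠ ⊤)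
    exact hno B hB (hKtop ▸ le_top)
  obtain ⟨B, hB, hKB⟩ := hA.isPGroup.exists_index_eq_le hKtop
  obtain ⟨x, hxB, hxK⟩ := SetLike.not_le_iff_exists.mp (hno B hB)
  obtain ⟨y, hyB⟩ : ∃ y, y ∉ B := by
    by_contra! hall
    rw [(Subgroup.eq_top_iff' B).mpr hall, Subgroup.index_top] at hB
    exact (Fact.out : r.Prime).one_lt.ne hB
  -- `C_H(z)` is `A`-invariant, and proper as `z ∉ K`
  have hfree (z : A) (hz : z ∉ K) : MonoidHom.FixedPointFree (z • · : H → H) := by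
    intro w hw
    rcases hsimple (fixedSub H z) (Subgroup.isInvariant_fixedSub_of_commute fun a => hA.1 a z)
      with hbot | htop
    · exact Subgroup.mem_bot.mp (hbot ▸ hw)
    · exact absurd ((hK z).mpr fun v => (htop ▸ Subgroup.mem_top v : v ∈ fixedSub H z)) hz
  have hxy (i : ℕ) : x ^ i * y ∉ K := fun hmem =>
    hyB (by simpa using B.mul_mem (B.inv_mem (B.pow_mem hxB i)) (hKB hmem))
  have hpow := pow_eq_one_of_fixedPointFree (hA.1 x y) (hA.2 x) (hA.2 y) (hfree x hxK)
    fun i => hfree _ (hxy i)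
  have hrH : IsPGroup r H := fun h => ⟨1, by rw [pow_one, hpow]⟩
  exact hH (hrH.card_eq_or_dvd.resolve_left Finite.one_lt_card.ne')

/-- `⟨C_H(B) : B ∈ hyp(A)⟩`. -/
def hyperplaneFixedPoints (r : ℕ) (A H : Type*) [Group A] [Group H]
    [MulDistribMulAction A H] : Subgroup H :=
  ⨆ (B : Subgroup A) (_ : B.index = r), FixedPoints.subgroup B H

section Generation

variable {r : ℕ} {A H Q : Type*} [Group A] [Group H] [Group Q]
  [MulDistribMulAction A H] [MulDistribMulAction A Q]

theorem le_hyperplaneFixedPoints {B : Subgroup A} (hB : B.index = r) :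
    FixedPoints.subgroup B H ≤ hyperplaneFixedPoints r A H :=
  le_iSup₂ (f := fun (B : Subgroup A) (_ : B.index = r) => FixedPoints.subgroup B H) B hB

theorem map_hyperplaneFixedPoints_le (f : H →* Q) (hf : ∀ (a : A) (x : H), f (a • x) = a • f x) :
    (hyperplaneFixedPoints r A H).map f ≤ hyperplaneFixedPoints r A Q := by
  simp only [hyperplaneFixedPoints, Subgroup.map_iSup]
  refine iSup₂_mono fun B _ => Subgroup.map_le_iff_le_comap.mpr fun x hx => ?_
  exact (FixedPoints.mem_subgroup B Q _).mpr fun b => by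
    rw [Subgroup.smul_def, ← hf, ← Subgroup.smul_def, (FixedPoints.mem_subgroup B H x).mp hx b]

theorem hyperplaneFixedPoints_le_map [Fact r.Prime] [Finite H] (hA : IsPGroup r A)
    (hH : ¬ r ∣ Nat.card H) (f : H →* Q) (hsurj : Function.Surjective f)
    (hf : ∀ (a : A) (x : H), f (a • x) = a • f x) :
    hyperplaneFixedPoints r A Q ≤ (hyperplaneFixedPoints r A H).map f := by
  refine iSup₂_le fun B hB q hq => ?_
  obtain ⟨x, rfl⟩ := hsurj q
  have hker : f.ker.IsInvariant B := fun b z hz => by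
    rw [MonoidHom.mem_ker, Subgroup.smul_def, hf, hz, smul_one]
  obtain ⟨y, hyx, hy⟩ := (hA.to_subgroup B).exists_fixed_mk_eq hH hker (x := x) fun b => by
    refine QuotientGroup.eq.mpr (f.eq_iff.mp ?_)
    rw [Subgroup.smul_def, hf, ← Subgroup.smul_def, (FixedPoints.mem_subgroup B Q _).mp hq b]
  exact ⟨y, le_hyperplaneFixedPoints hB ((FixedPoints.mem_subgroup B H y).mpr hy),
    f.eq_iff.mpr (QuotientGroup.eq.mp hyx.symm)⟩

end Generation

theorem hyperplaneFixedPoints_eq_top_of_surjective {r : ℕ} [Fact r.Prime] {A H Q : Type*}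
    [Group A] [Group H] [Group Q] [Finite H] [MulDistribMulAction A H] [MulDistribMulAction A Q]
    (hA : IsPGroup r A) (hH : ¬ r ∣ Nat.card H) (f : H →* Q) (hsurj : Function.Surjective f)
    (hf : ∀ (a : A) (x : H), f (a • x) = a • f x) (hQ : hyperplaneFixedPoints r A Q = ⊤)
    (hker : f.ker ≤ hyperplaneFixedPoints r A H) : hyperplaneFixedPoints r A H = ⊤ := by
  have hmap := hyperplaneFixedPoints_le_map hA hH f hsurj hf
  rw [hQ, top_le_iff] at hmap
  have hcomap := congrArg (Subgroup.comap f) hmap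
  rwa [Subgroup.comap_map_eq, Subgroup.comap_top, sup_eq_left.mpr hker] at hcomap

theorem IsElementaryAbelian.hyperplaneFixedPoints_eq_top_of_isPGroup {r : ℕ} [Fact r.Prime]
    {A H : Type*} [Group A] [Finite A] [Nontrivial A] [Group H] [Finite H]
    [MulDistribMulAction A H] (hA : IsElementaryAbelian r A) (hH : ¬ r ∣ Nat.card H) {q : ℕ}
    [Fact q.Prime] (hq : IsPGroup q H)
    (hsimple : ∀ N : Subgroup H, N.Normal → N.IsInvariant A → N = ⊥ ∨ N = ⊤) :
    hyperplaneFixedPoints r A H = ⊤ := by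
  rcases subsingleton_or_nontrivial H with _ | _
  · exact Subsingleton.elim _ _
  have hZ : Subgroup.center H = ⊤ :=
    (hsimple _ inferInstance (Subgroup.isInvariant_center A)).resolve_left
      ((Subgroup.nontrivial_iff_ne_bot _).mp hq.center_nontrivial)
  let _ : CommGroup H :=
    { mul_comm := fun g h => Subgroup.mem_center_iff.mp (hZ ▸ Subgroup.mem_top h) g }
  obtain ⟨B, hB, hBH⟩ := hA.exists_index_eq_fixedPoints_eq_top hH fun N =>
    hsimple N inferInstance
  exact top_le_iff.mp (hBH ▸ le_hyperplaneFixedPoints hB)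

theorem IsElementaryAbelian.hyperplaneFixedPoints_eq_top_of_simple {r : ℕ} [Fact r.Prime]
    {A H : Type*} [Group A] [Finite A] [Nontrivial A] [Group H] [Finite H]
    [MulDistribMulAction A H] (hA : IsElementaryAbelian r A) (hH : ¬ r ∣ Nat.card H)
    (hsimple : ∀ N : Subgroup H, N.Normal → N.IsInvariant A → N = ⊥ ∨ N = ⊤)
    (hproper : ∀ N : Subgroup H, N.IsInvariant A → N ≠ ⊤ → N ≤ hyperplaneFixedPoints r A H) :
    hyperplaneFixedPoints r A H = ⊤ := by
  refine Subgroup.eq_top_of_forall_sylow_le _ fun q hq => ?_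
  have := Fact.mk hq
  obtain ⟨Q, hQ⟩ := hA.isPGroup.exists_isInvariant_sylow hH q
  by_cases hQtop : (Q : Subgroup H) = ⊤
  · have hqH : IsPGroup q H :=
      Q.isPGroup'.of_equiv ((MulEquiv.subgroupCongr hQtop).trans Subgroup.topEquiv)
    rw [hA.hyperplaneFixedPoints_eq_top_of_isPGroup hH hqH hsimple]
    exact ⟨Q, le_top⟩
  · exact ⟨Q, hproper Q hQ hQtop⟩

theorem IsElementaryAbelian.hyperplaneFixedPoints_eq_top {r : ℕ} [Fact r.Prime] {A : Type*}
    [Group A] [Finite A] (hA : IsElementaryAbelian r A) (hnc : ¬ IsCyclic A) {H : Type*}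
    [Group H] [Finite H] [MulDistribMulAction A H] (hH : ¬ r ∣ Nat.card H) :
    hyperplaneFixedPoints r A H = ⊤ := by
  have := nontrivial_of_not_isCyclic hnc
  induction hn : Nat.card H using Nat.strong_induction_on generalizing H with
  | _ n IH =>
  subst hn
  have hproper (N : Subgroup H) (hN : N.IsInvariant A) (hNtop : N ≠ ⊤) :
      N ≤ hyperplaneFixedPoints r A H := by
    let _ := hN.mulDistribMulAction
    have hcard : Nat.card N < Nat.card H :=
      N.card_le_card_group.lt_of_ne fun h => hNtop (Subgroup.eq_top_of_card_eq _ h)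
    have hN := IH _ hcard (fun h => hH (h.trans N.card_subgroup_dvd_card)) rfl
    rw [← N.range_subtype, MonoidHom.range_eq_map, ← hN]
    exact map_hyperplaneFixedPoints_le N.subtype fun _ _ => rfl
  by_cases hsimple : ∀ N : Subgroup H, N.Normal → N.IsInvariant A → N = ⊥ ∨ N = ⊤
  · exact hA.hyperplaneFixedPoints_eq_top_of_simple hH hsimple hproper
  push Not at hsimple
  obtain ⟨N, _, hN, hNbot, hNtop⟩ := hsimple
  let _ := hN.quotientMulDistribMulAction
  have hcard := Subgroup.card_eq_card_quotient_mul_card_subgroup N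
  have hlt : Nat.card (H ⧸ N) < Nat.card H := by
    rw [hcard]
    exact lt_mul_of_one_lt_right Nat.card_pos ((Subgroup.one_lt_card_iff_ne_bot N).mpr hNbot)
  refine hyperplaneFixedPoints_eq_top_of_surjective hA.isPGroup hH (QuotientGroup.mk' N)
    (QuotientGroup.mk'_surjective N) (fun _ _ => rfl) ?_ ?_
  · exact IH _ hlt (fun h => hH (hcard ▸ dvd_mul_of_dvd_left h _)) rfl
  · rw [QuotientGroup.ker_mk']
    exact hproper N hN hNtop

section Signalizer

variable {A G : Type*} [Group A] [Group G] [MulDistribMulAction A G] {θ : A → Subgroup G}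

theorem IsSignalizerFunctorOn.mem_thetaB (hθ : IsSignalizerFunctorOn ⊤ θ) {a : A} (ha : a ≠ 1)
    {B : Subgroup A} {w : G} (hw : w ∈ θ a) (hfix : ∀ b ∈ B, b • w = w) : w ∈ thetaB θ B := by
  refine Subgroup.mem_iInf.mpr fun b => Subgroup.mem_iInf.mpr fun hb => ?_
  exact (hθ a trivial ha).2.2.2.2 b trivial hb.2 ⟨hw, hfix b hb.1⟩

theorem thetaB_le_s18 {B : Subgroup A} {a : A} (ha : a ≠ 1) (haB : a ∈ B) : thetaB θ B ≤ θ a :=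
  iInf₂_le a ⟨haB, ha⟩

theorem IsSignalizerFunctorOn.mem_iSup_thetaB {r : ℕ} (hr : r.Prime) [Finite A]
    (hA : IsElementaryAbelian r A) (hnc : ¬ IsCyclic A) (hθ : IsSignalizerFunctorOn ⊤ θ)
    {a : A} (ha : a ≠ 1) {B : Subgroup A} (hB : B.index = r) {w : G} (hw : w ∈ θ a)
    (hwB : ∀ b ∈ B, b • w = w) :
    w ∈ ⨆ (B : Subgroup A) (_ : B.index = r ∧ a ∈ B), thetaB θ B := by
  have := Fact.mk hr
  by_cases haB : a ∈ B
  · exact Subgroup.mem_iSup_of_mem B <| Subgroup.mem_iSup_of_mem ⟨hB, haB⟩ <|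
      hθ.mem_thetaB ha hw hwB
  have hstab : B ⊔ Subgroup.zpowers a ≤ MulAction.stabilizer A w :=
    sup_le hwB (Subgroup.zpowers_le.mpr ((hθ a trivial ha).2.2.1 hw))
  rw [Subgroup.sup_zpowers_eq_top_of_index_eq_prime hr hB haB] at hstab
  obtain ⟨B', hB', haB'⟩ := hA.exists_index_eq_mem hnc a
  exact Subgroup.mem_iSup_of_mem B' <| Subgroup.mem_iSup_of_mem ⟨hB', haB'⟩ <|
    hθ.mem_thetaB ha hw fun b _ => hstab trivial

end Signalizer

/-- For an `A`-signalizer functor `θ` with `A` a noncyclic elementary abelian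
`r`-group, `θ(a) = ⟨θ(B) : B ∈ hyp(A), a ∈ B⟩` for every `a ∈ A∖{1}`. -/
theorem theta_eq_iSup_thetaB
    {A G : Type*} [Group A] [Finite A] [Group G] [MulDistribMulAction A G]
    (r : ℕ) (hr : r.Prime) (hA : IsElementaryAbelian r A) (hnc : ¬ IsCyclic A)
    (θ : A → Subgroup G) (hθ : IsSignalizerFunctorOn ⊤ θ) :
    ∀ a : A, a ≠ 1 →
      θ a = ⨆ (B : Subgroup A) (_ : B.index = r ∧ a ∈ B), thetaB θ B := by
  have := Fact.mk hr
  have := nontrivial_of_not_isCyclic hnc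
  intro a ha
  refine le_antisymm ?_ (iSup₂_le fun B hB => thetaB_le_s18 ha hB.2)
  obtain ⟨hfin, hinv, -, hcop, -⟩ := hθ a trivial ha
  let _ := (Subgroup.isInvariant_of_smul_eq fun c => hinv c trivial).mulDistribMulAction
  have hrA : r ∣ Nat.card (⊤ : Subgroup A) := by
    rw [Subgroup.card_top]
    exact hA.isPGroup.card_eq_or_dvd.resolve_left Finite.one_lt_card.ne'
  have hgen := hA.hyperplaneFixedPoints_eq_top hnc (H := θ a) fun h =>
    hr.coprime_iff_not_dvd.mp (hcop.coprime_dvd_left h) hrA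
  rw [← (θ a).range_subtype, MonoidHom.range_eq_map, ← hgen, hyperplaneFixedPoints]
  simp only [Subgroup.map_iSup]
  refine iSup₂_le fun B hB => ?_
  rintro _ ⟨w, hw, rfl⟩
  exact hθ.mem_iSup_thetaB hr hA hnc ha hB w.2 fun b hb =>
    congrArg Subtype.val ((FixedPoints.mem_subgroup B (θ a) w).mp hw ⟨b, hb⟩)
end

section
/- Let X be a finite group with E(X) = 1, and let I and J be subgroups of X such that I·F(X) and J·F(X) are nilpotent. Let p and q be distinct primes. Then [O_p(I), O_q(J)] = 1. -/
/-!
Since `E(X) = 1`, the Fitting subgroup is self-centralizing: otherwise a minimal subnormal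
subgroup `D` with `C_X(F) ∩ F < D ≤ C_X(F)` is either nilpotent, hence contained in `F(X)` by
Fitting's theorem, or has a component `⁅D, D⁆`.

Let `a ∈ O_p(I)`, `b ∈ O_q(J)` and `c = ⁅a, b⁆`. In the nilpotent groups `IF` and `JF`, `a`
centralizes the `p'`-elements of `F` and `b` its `p`-elements, so `c` centralizes `F` and
therefore lies in `F`. Then `b a b⁻¹ = c⁻¹ a ∈ IF` and `a b a⁻¹ = c b ∈ JF`; as the `p`-elements of
a finite nilpotent group form a subgroup, `c = a (b a b⁻¹)⁻¹` is a `p`-element and likewise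
`c = (a b a⁻¹) b⁻¹` is a `q`-element, so `c = 1`.
-/

/-- A subgroup is subnormal if it is a term of a finite chain of subgroups,
each normal in the next, ending at the whole group. -/
def Subgroup.IsSubnormalIn {G : Type*} [Group G] (H : Subgroup G) : Prop :=
  ∃ (n : ℕ) (c : Fin (n + 1) → Subgroup G),
    c 0 = H ∧ c (Fin.last n) = ⊤ ∧
    ∀ i : Fin n, c i.castSucc ≤ c i.succ ∧ ((c i.castSucc).subgroupOf (c i.succ)).Normal

/-- A group is quasisimple if it is perfect and its quotient by its center is simple. -/
def IsQuasisimple (H : Type*) [Group H] : Prop :=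
  (⁅(⊤ : Subgroup H), (⊤ : Subgroup H)⁆ = ⊤) ∧ IsSimpleGroup (H ⧸ Subgroup.center H)

/-- A component of a group is a quasisimple subnormal subgroup. -/
def Subgroup.IsComponent {G : Type*} [Group G] (K : Subgroup G) : Prop :=
  K.IsSubnormalIn ∧ IsQuasisimple K

/-- `sol G` : the subgroup generated by all normal solvable subgroups of `G`;
for finite `G` this is the largest normal solvable subgroup. -/
def sol (G : Type*) [Group G] : Subgroup G :=
  Subgroup.closure {x : G | ∃ N : Subgroup G, N.Normal ∧ IsSolvable N ∧ x ∈ N}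

instance sol_normal (G : Type*) [Group G] : (sol G).Normal := by
  constructor
  intro n hn g
  induction hn using Subgroup.closure_induction with
  | mem x hx =>
      obtain ⟨N, hN, hNs, hxN⟩ := hx
      exact Subgroup.subset_closure ⟨N, hN, hNs, hN.conj_mem x hxN g⟩
  | one => simpa using (sol G).one_mem
  | mul x y _ _ hx hy =>
      have : g * (x * y) * g⁻¹ = (g * x * g⁻¹) * (g * y * g⁻¹) := by group
      rw [this]; exact (sol G).mul_mem hx hy
  | inv x _ hx =>
      have : g * x⁻¹ * g⁻¹ = (g * x * g⁻¹)⁻¹ := by group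
      rw [this]; exact (sol G).inv_mem hx

/-- A sol-component of `G`: a perfect subnormal subgroup whose image in `G/sol(G)`
is a component of `G/sol(G)`. -/
def Subgroup.IsSolComponent {G : Type*} [Group G] (K : Subgroup G) : Prop :=
  ⁅K, K⁆ = K ∧ K.IsSubnormalIn ∧
    (K.map (QuotientGroup.mk' (sol G))).IsComponent

/-- The subgroup generated by the sol-components. -/
def layerSol (G : Type*) [Group G] : Subgroup G :=
  Subgroup.closure {x : G | ∃ K : Subgroup G, K.IsSolComponent ∧ x ∈ K}

/-- `O*(G) = sol(G) · layerSol(G)`. -/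
def Ostar (G : Type*) [Group G] : Subgroup G := sol G ⊔ layerSol G

/-- The Fitting subgroup: the subgroup generated by all nilpotent normal subgroups. -/
def fitting (G : Type*) [Group G] : Subgroup G :=
  Subgroup.closure {x : G | ∃ N : Subgroup G, N.Normal ∧ Group.IsNilpotent N ∧ x ∈ N}

/-- The layer `E(G)`: the subgroup generated by all components. -/
def layer (G : Type*) [Group G] : Subgroup G :=
  Subgroup.closure {x : G | ∃ K : Subgroup G, K.IsComponent ∧ x ∈ K}

/-- The generalized Fitting subgroup `F*(G) = F(G)E(G)`. -/
def Fstar (G : Type*) [Group G] : Subgroup G := fitting G ⊔ layer G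

/-- `O_p(G)` : the subgroup generated by all normal `p`-subgroups of `G`. -/
def pCore (p : ℕ) (G : Type*) [Group G] : Subgroup G :=
  Subgroup.closure {x : G | ∃ N : Subgroup G, N.Normal ∧ IsPGroup p N ∧ x ∈ N}

open Subgroup
open scoped commutatorElement

section PElement

variable {G : Type*} [Group G] {p : ℕ}

def IsPElement (p : ℕ) (g : G) : Prop := ∃ n : ℕ, g ^ p ^ n = 1

namespace IsPElement

variable {g : G}

lemma orderOf_dvd (hg : IsPElement p g) : ∃ n, orderOf g ∣ p ^ n :=
  hg.imp fun _ => orderOf_dvd_of_pow_eq_one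

lemma coprime_orderOf {n : ℕ} (hg : IsPElement p g) (hpn : p.Coprime n) : (orderOf g).Coprime n :=
  let ⟨k, hk⟩ := hg.orderOf_dvd
  (hpn.pow_left k).coprime_dvd_left hk

lemma eq_one {q : ℕ} (hp : IsPElement p g) (hq : IsPElement q g) (hpq : p.Coprime q) : g = 1 := by
  obtain ⟨n, hn⟩ := hq.orderOf_dvd
  exact orderOf_eq_one_iff.mp <| (hp.coprime_orderOf (hpq.pow_right n)).eq_one_of_dvd hn

lemma conj (hg : IsPElement p g) (h : G) : IsPElement p (h * g * h⁻¹) :=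
  hg.imp fun n hn => by rw [conj_pow, hn, mul_one, mul_inv_cancel]

lemma inv (hg : IsPElement p g) : IsPElement p g⁻¹ :=
  hg.imp fun n hn => by rw [inv_pow, hn, inv_one]

lemma isPGroup_zpowers (hg : IsPElement p g) : IsPGroup p (zpowers g) := by
  rintro ⟨_, k, rfl⟩
  obtain ⟨n, hn⟩ := hg
  refine ⟨n, Subtype.ext ?_⟩
  simp only [SubgroupClass.coe_pow, OneMemClass.coe_one]
  rw [← zpow_natCast, ← zpow_mul, mul_comm, zpow_mul, zpow_natCast, hn, one_zpow]

end IsPElement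

lemma IsPGroup.isPElement {H : Subgroup G} (hH : IsPGroup p H) {g : G} (hg : g ∈ H) :
    IsPElement p g :=
  (hH ⟨g, hg⟩).imp fun _ hn => by simpa using congrArg Subtype.val hn

lemma isPElement_coe {H : Subgroup G} {g : H} : IsPElement p (g : G) ↔ IsPElement p g := by
  simp only [IsPElement, ← Subgroup.coe_pow, OneMemClass.coe_eq_one]

lemma exists_mul_eq_of_pow_mul_eq_one {g : G} {a b : ℕ} (hab : a.Coprime b)
    (hg : g ^ (a * b) = 1) :
    ∃ x ∈ zpowers g, ∃ y ∈ zpowers g, x * y = g ∧ x ^ a = 1 ∧ y ^ b = 1 := by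
  have hbezout := Nat.gcd_eq_gcd_ab a b
  rw [hab, Nat.cast_one] at hbezout
  have hg' : g ^ (a * b : ℤ) = 1 := by exact_mod_cast hg
  refine ⟨g ^ (b * a.gcdB b), zpow_mem_zpowers _ _, g ^ (a * a.gcdA b), zpow_mem_zpowers _ _,
    ?_, ?_, ?_⟩
  · rw [← zpow_add, add_comm, ← hbezout, zpow_one]
  · rw [← zpow_natCast, ← zpow_mul, mul_comm, ← mul_assoc, zpow_mul, hg', one_zpow]
  · rw [← zpow_natCast, ← zpow_mul, mul_comm, ← mul_assoc, mul_comm (b : ℤ), zpow_mul, hg',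
      one_zpow]

lemma exists_isPElement_mul_coprime [Finite G] [Fact p.Prime] (g : G) :
    ∃ x ∈ zpowers g, ∃ y ∈ zpowers g, x * y = g ∧ IsPElement p x ∧ (orderOf y).Coprime p := by
  have hg : orderOf g ≠ 0 := (orderOf_pos g).ne'
  have hcop := Nat.coprime_ordCompl (Fact.out : p.Prime) hg
  obtain ⟨x, hx, y, hy, hxy, hxp, hyp⟩ := exists_mul_eq_of_pow_mul_eq_one (hcop.pow_left _)
    (by rw [Nat.ordProj_mul_ordCompl_eq_self, pow_orderOf_eq_one])
  exact ⟨x, hx, y, hy, hxy, ⟨_, hxp⟩, hcop.symm.coprime_dvd_left (orderOf_dvd_of_pow_eq_one hyp)⟩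

end PElement

section Nilpotent

open Group

variable {G : Type*} [Group G] {p : ℕ}

lemma commutatorElement_pow_right {x y : G} (h : Commute ⁅x, y⁆ y) (n : ℕ) :
    ⁅x, y ^ n⁆ = ⁅x, y⁆ ^ n := by
  induction n with
  | zero => simp
  | succ n ih =>
    calc ⁅x, y ^ (n + 1)⁆ = ⁅x, y⁆ * (y * ⁅x, y ^ n⁆ * y⁻¹) := by
          simp only [commutatorElement_def, pow_succ']; group
      _ = ⁅x, y⁆ ^ (n + 1) := by
          rw [ih, ← (h.pow_left n).eq, mul_inv_cancel_right, pow_succ']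

variable [Finite G] [IsNilpotent G] [Fact p.Prime]

lemma IsPElement.mem_sylow {g : G} (hg : IsPElement p g) (P : Sylow p G) : g ∈ P := by
  have := Sylow.unique_of_normal P inferInstance
  obtain ⟨Q, hQ⟩ := hg.isPGroup_zpowers.exists_le_sylow
  exact Subsingleton.elim Q P ▸ hQ (mem_zpowers g)

lemma IsPElement.mul {x y : G} (hx : IsPElement p x) (hy : IsPElement p y) :
    IsPElement p (x * y) := by
  obtain ⟨P⟩ : Nonempty (Sylow p G) := inferInstance
  exact P.isPGroup'.isPElement (mul_mem (hx.mem_sylow P) (hy.mem_sylow P))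

lemma IsPElement.commute_of_coprime {x y : G} (hx : IsPElement p x)
    (hy : (orderOf y).Coprime p) : Commute x y := by
  obtain ⟨P⟩ : Nonempty (Sylow p G) := inferInstance
  have hP : ∀ u ∈ (P : Subgroup G), ⁅u, y⁆ ∈ (P : Subgroup G) := fun u hu => by
    rw [commutatorElement_def, mul_assoc, mul_assoc, ← mul_assoc y]
    exact mul_mem hu (Normal.conj_mem inferInstance _ (inv_mem hu) y)
  have key : ∀ u ∈ (P : Subgroup G), Commute ⁅u, y⁆ y → ⁅u, y⁆ = 1 := fun u hu h => by
    have hpow : ⁅u, y⁆ ^ orderOf y = 1 := by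
      rw [← commutatorElement_pow_right h, pow_orderOf_eq_one, commutatorElement_one_right]
    exact orderOf_eq_one_iff.mp <| ((P.isPGroup'.isPElement (hP u hu)).coprime_orderOf
      hy.symm).eq_one_of_dvd (orderOf_dvd_of_pow_eq_one hpow)
  -- `u ↦ ⁅u, y⁆` maps `P ∩ Zₙ₊₁` into `P ∩ Zₙ` along the upper central series
  suffices ∀ n, ∀ u ∈ (P : Subgroup G), u ∈ Subgroup.upperCentralSeries G n → ⁅u, y⁆ = 1 by
    obtain ⟨n, hn⟩ := IsNilpotent.nilpotent' (G := G)
    exact commutatorElement_eq_one_iff_commute.mp (this n x (hx.mem_sylow P) (hn ▸ mem_top x))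
  intro n
  induction n with
  | zero => simp +contextual
  | succ n ih =>
    intro u hu hun
    exact key u hu <| commutatorElement_eq_one_iff_commute.mp <|
      ih _ (hP u hu) (Subgroup.mem_upperCentralSeries_succ_iff.mp hun y)

end Nilpotent

section NilpotentSubgroup

variable {G : Type*} [Group G] [Finite G] {p : ℕ} [Fact p.Prime] {H : Subgroup G}
  [Group.IsNilpotent H] {x y : G}

lemma IsPElement.mul_of_mem (hxH : x ∈ H) (hyH : y ∈ H) (hx : IsPElement p x)
    (hy : IsPElement p y) : IsPElement p (x * y) :=
  isPElement_coe.mpr ((isPElement_coe (g := ⟨x, hxH⟩)).mp hx |>.mul <|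
    (isPElement_coe (g := ⟨y, hyH⟩)).mp hy)

lemma IsPElement.commute_of_coprime_of_mem (hxH : x ∈ H) (hyH : y ∈ H) (hx : IsPElement p x)
    (hy : (orderOf y).Coprime p) : Commute x y := by
  have := ((isPElement_coe (g := ⟨x, hxH⟩)).mp hx).commute_of_coprime
    (y := ⟨y, hyH⟩) (by rwa [Subgroup.orderOf_mk])
  exact this.map H.subtype

end NilpotentSubgroup

section Commutator

variable {G : Type*} [Group G] {p : ℕ}

lemma commute_commutatorElement_of_commute {a b y : G} (h₁ : Commute b y)
    (h₂ : Commute b (a⁻¹ * y * a)) : Commute ⁅a, b⁆ y := by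
  calc ⁅a, b⁆ * y = a * b * a⁻¹ * (b⁻¹ * y) := by rw [commutatorElement_def]; group
    _ = a * (b * (a⁻¹ * y * a)) * a⁻¹ * b⁻¹ := by rw [h₁.inv_left.eq]; group
    _ = y * ⁅a, b⁆ := by rw [h₂.eq, commutatorElement_def]; group

/-- Split `f ∈ F` into commuting `p`- and `p'`-parts `y z`; `⁅a, b⁆` commutes with `y` because
`b` centralizes `y` and `a⁻¹ y a`, and with `z` because `a` centralizes `z` and `b⁻¹ z b`. -/
theorem commutatorElement_mem_centralizer [Finite G] [Fact p.Prime] {F : Subgroup G} [F.Normal]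
    {a b : G} (ha : ∀ f ∈ F, (orderOf f).Coprime p → Commute a f)
    (hb : ∀ f ∈ F, IsPElement p f → Commute b f) : ⁅a, b⁆ ∈ centralizer (F : Set G) := by
  rw [mem_centralizer_iff]
  intro f hf
  obtain ⟨y, hy, z, hz, rfl, hyp, hzp⟩ := exists_isPElement_mul_coprime (p := p) f
  have hyF : y ∈ F := zpowers_le.mpr hf hy
  have hzF : z ∈ F := zpowers_le.mpr hf hz
  have hcy : Commute ⁅a, b⁆ y := commute_commutatorElement_of_commute (hb y hyF hyp)
    (hb _ (by simpa using Normal.conj_mem ‹_› y hyF a⁻¹) (by simpa using hyp.conj a⁻¹))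
  have hcz : Commute ⁅b, a⁆ z := commute_commutatorElement_of_commute (ha z hzF hzp)
    (ha _ (by simpa using Normal.conj_mem ‹_› z hzF b⁻¹)
      (by rwa [show b⁻¹ * z * b = MulAut.conj b⁻¹ z by simp, MulEquiv.orderOf_eq]))
  exact (hcy.mul_right (by simpa using hcz.inv_left)).eq.symm

variable [Finite G] [Fact p.Prime] {H : Subgroup G} [Group.IsNilpotent H] {a b : G}

lemma IsPElement.commutatorElement_left (hpa : IsPElement p a) (ha : a ∈ H) (hc : ⁅a, b⁆ ∈ H) :
    IsPElement p ⁅a, b⁆ := by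
  have hconj : b * a * b⁻¹ ∈ H := by
    rw [show b * a * b⁻¹ = ⁅a, b⁆⁻¹ * a by rw [commutatorElement_def]; group]
    exact mul_mem (inv_mem hc) ha
  rw [show ⁅a, b⁆ = a * (b * a * b⁻¹)⁻¹ by rw [commutatorElement_def]; group]
  exact hpa.mul_of_mem ha (inv_mem hconj) (hpa.conj b).inv

lemma IsPElement.commutatorElement_right (hpb : IsPElement p b) (hb : b ∈ H) (hc : ⁅a, b⁆ ∈ H) :
    IsPElement p ⁅a, b⁆ := by
  rw [← commutatorElement_inv] at hc ⊢
  exact (hpb.commutatorElement_left hb (inv_mem_iff.mp hc)).inv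

end Commutator

lemma isPGroup_pCore {G : Type*} [Group G] [Finite G] (p : ℕ) [Fact p.Prime] :
    IsPGroup p (pCore p G) := by
  obtain ⟨P⟩ : Nonempty (Sylow p G) := inferInstance
  refine P.isPGroup'.to_le (closure_le _ |>.mpr ?_)
  rintro x ⟨N, hN, hNp, hx⟩
  exact hNp.le_sylow_of_normal P hx

section Fitting

open Group

variable {G : Type*} [Group G]

instance fitting_normal : (fitting G).Normal := by
  have : fitting G = sSup {N : Subgroup G | N.Normal ∧ IsNilpotent N} := by
    refine le_antisymm (closure_le _ |>.mpr ?_) (sSup_le ?_)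
    · rintro x ⟨N, hN, hNn, hx⟩
      exact le_sSup (show N ∈ {N : Subgroup G | N.Normal ∧ IsNilpotent N} from ⟨hN, hNn⟩) hx
    · rintro N ⟨hN, hNn⟩ x hx
      exact subset_closure ⟨N, hN, hNn, hx⟩
  rw [this]
  exact sSup_normal _ fun _ hN => hN.1

variable [Finite G]

lemma exists_normal_isPGroup_not_dvd_relIndex (p : ℕ) [Fact p.Prime] (M : Subgroup G)
    [M.Normal] [IsNilpotent M] :
    ∃ R : Subgroup G, R.Normal ∧ IsPGroup p R ∧ R ≤ M ∧ ¬ p ∣ R.relIndex M := by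
  obtain ⟨P⟩ : Nonempty (Sylow p M) := inferInstance
  have := Sylow.characteristic_of_normal P inferInstance
  refine ⟨(P : Subgroup M).map M.subtype, inferInstance, P.isPGroup'.map _, map_subtype_le _, ?_⟩
  rw [relIndex, subgroupOf, comap_map_eq_self_of_injective M.subtype_injective]
  exact P.not_dvd_index

/-- Fitting's theorem. For each `p`, the Sylow `p`-subgroups `Rₘ, Rₙ` of `M, N` generate a normal
`p`-subgroup `R` whose index `[M : R ∩ M] [N : RM ∩ N]` divides `[M : Rₘ] [N : Rₙ]`, so `R` is
a normal Sylow subgroup of `G`. -/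
theorem isNilpotent_of_sup_eq_top {M N : Subgroup G} [M.Normal] [N.Normal] [IsNilpotent M]
    [IsNilpotent N] (h : M ⊔ N = ⊤) : IsNilpotent G := by
  refine (Group.isNilpotent_of_finite_tfae.out 3 0).mp fun p hp P => ?_
  have := hp
  obtain ⟨RM, _, hRMp, hRM, hRMi⟩ := exists_normal_isPGroup_not_dvd_relIndex p M
  obtain ⟨RN, _, hRNp, hRN, hRNi⟩ := exists_normal_isPGroup_not_dvd_relIndex p N
  set R := RM ⊔ RN
  have htop : R ⊔ M ⊔ N = ⊤ := by rw [sup_assoc R M N, h, sup_top_eq]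
  have hRM : (R ⊔ M).index = (R ⊔ M).relIndex N := by
    rw [← relIndex_sup_left N (R ⊔ M), htop, relIndex_top_right]
  have hindex : R.index = R.relIndex M * (R ⊔ M).relIndex N := by
    rw [← relIndex_mul_index (le_sup_left : R ≤ R ⊔ M), relIndex_sup_left, hRM]
  have hp : ¬ p ∣ R.index := by
    rw [hindex, Nat.Prime.dvd_mul Fact.out, not_or]
    exact ⟨fun hd => hRMi (hd.trans (relIndex_dvd_of_le_left M le_sup_left)),
      fun hd => hRNi (hd.trans (relIndex_dvd_of_le_left N (le_sup_right.trans le_sup_left)))⟩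
  let S := (hRMp.to_sup_of_normal_right hRNp).toSylow hp
  have hS : (S : Subgroup G).Normal := inferInstanceAs R.Normal
  have := Sylow.unique_of_normal S hS
  exact Subsingleton.elim S P ▸ hS

theorem isNilpotent_sup_of_le_normalizer {L₁ L₂ : Subgroup G} [IsNilpotent L₁] [IsNilpotent L₂]
    (h₁ : L₁ ⊔ L₂ ≤ normalizer L₁) (h₂ : L₁ ⊔ L₂ ≤ normalizer L₂) : IsNilpotent ↥(L₁ ⊔ L₂) := by
  have := (normal_subgroupOf_iff_le_normalizer le_sup_left).mpr h₁
  have := (normal_subgroupOf_iff_le_normalizer le_sup_right).mpr h₂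
  have := Group.nilpotent_of_mulEquiv (subgroupOfEquivOfLe (le_sup_left : L₁ ≤ L₁ ⊔ L₂)).symm
  have := Group.nilpotent_of_mulEquiv (subgroupOfEquivOfLe (le_sup_right : L₂ ≤ L₁ ⊔ L₂)).symm
  exact isNilpotent_of_sup_eq_top <|
    (subgroupOf_sup le_sup_left le_sup_right).symm.trans (subgroupOf_self _)

/-- `N` is the Fitting subgroup of `K`, viewed inside `G`. -/
theorem exists_greatest_isNilpotent_le_normalizer (K : Subgroup G) :
    ∃ N ≤ K, IsNilpotent N ∧ normalizer K ≤ normalizer (N : Set G) ∧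
      ∀ L ≤ K, K ≤ normalizer L → IsNilpotent L → L ≤ N := by
  set s := {L : Subgroup G | L ≤ K ∧ K ≤ normalizer L ∧ IsNilpotent L}
  have hs : SupClosed s := by
    rintro L₁ ⟨hL₁K, hKL₁, _⟩ L₂ ⟨hL₂K, hKL₂, _⟩
    refine ⟨sup_le hL₁K hL₂K, (le_inf hKL₁ hKL₂).trans
      (normalizer_inf_normalizer_le_normalizer_sup L₁ L₂), ?_⟩
    exact isNilpotent_sup_of_le_normalizer ((sup_le hL₁K hL₂K).trans hKL₁)
      ((sup_le hL₁K hL₂K).trans hKL₂)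
  have hconj : ∀ g ∈ normalizer K, ∀ L ∈ s, L.map (MulAut.conj g).toMonoidHom ∈ s := by
    rintro g hg L ⟨hLK, hKL, hL⟩
    have hKg : K.map (MulAut.conj g).toMonoidHom = K := mem_normalizer_iff_map_conj_eq.mp hg
    refine ⟨hKg ▸ map_mono hLK, hKg ▸ (map_mono hKL).trans (le_normalizer_map _), ?_⟩
    exact Group.nilpotent_of_mulEquiv (L.equivMapOfInjective _ (MulAut.conj g).injective)
  have hN : sSup s ∈ s :=
    hs.sSup_mem s.toFinite ⟨bot_le, le_top.trans (normalizer_eq_top ⊥).ge, inferInstance⟩ subset_rfl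
  refine ⟨sSup s, hN.1, hN.2.2, fun g hg => ?_, fun L hLK hKL hL => le_sSup ⟨hLK, hKL, hL⟩⟩
  refine mem_normalizer_iff_map_conj_eq.mpr <| eq_of_le_of_card_ge (le_sSup (hconj g hg _ hN)) ?_
  rw [card_map_of_injective (MulAut.conj g).injective]

theorem Subgroup.IsSubnormal.le_fitting {H : Subgroup G} (hH : H.IsSubnormal) [IsNilpotent H] :
    H ≤ fitting G := by
  suffices ∀ K : Subgroup G, K.IsSubnormal →
      ∀ L ≤ K, K ≤ normalizer L → IsNilpotent L → L ≤ fitting G from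
    this H hH H le_rfl le_normalizer inferInstance
  intro K hK
  induction hK with
  | top =>
    intro L _ hL hLn x hx
    exact subset_closure ⟨L, normalizer_eq_top_iff.mp (top_le_iff.mp hL), hLn, hx⟩
  | step H K hHK _ hHn ih =>
    intro L hLH hHL hLn
    obtain ⟨N, hNH, hNn, hNnorm, hNmax⟩ := exists_greatest_isNilpotent_le_normalizer H
    have hKH : K ≤ normalizer H := (normal_subgroupOf_iff_le_normalizer hHK).mp hHn
    exact (hNmax L hLH hHL hLn).trans (ih N (hNH.trans hHK) (hKH.trans hNnorm) hNn)

end Fitting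

section Component

open scoped Pointwise

variable {G : Type*} [Group G]

lemma Subgroup.IsSubnormal.isSubnormalIn {H : Subgroup G} (h : H.IsSubnormal) :
    H.IsSubnormalIn := by
  obtain ⟨n, f, hf, hnormal, h0, hn⟩ := IsSubnormal.isSubnormal_iff.mp h
  exact ⟨n, fun i => f i, h0, hn, fun i => ⟨hf (Nat.le_succ i), hnormal i⟩⟩

lemma isNilpotent_of_commutator_le_centralizer {D : Subgroup G}
    (h : ⁅D, D⁆ ≤ centralizer (D : Set G)) : Group.IsNilpotent D := by
  refine ⟨2, eq_top_iff.mpr fun x _ => Subgroup.mem_upperCentralSeries_succ_iff.mpr fun y => ?_⟩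
  rw [Subgroup.upperCentralSeries_one, mem_center_iff]
  exact fun g => Subtype.ext (mem_centralizer_iff.mp (h (commutator_mem_commutator x.2 y.2)) g g.2)

lemma commutatorElement_mul_left_of_commute {a z h : G} (hz : Commute z h) :
    ⁅a * z, h⁆ = ⁅a, h⁆ := by
  rw [commutatorElement_def, commutatorElement_def, mul_inv_rev, mul_assoc a z h, hz.eq]
  group

lemma commutator_sup_le_of_le_centralizer {A Z : Subgroup G} [Z.Normal]
    (hZ : Z ≤ centralizer ((A ⊔ Z : Subgroup G) : Set G)) : ⁅A ⊔ Z, A ⊔ Z⁆ ≤ ⁅A, A⁆ := by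
  rw [commutator_le]
  intro g hg h hh
  obtain ⟨a, ha, z, hz, rfl⟩ : g ∈ (A : Set G) * (Z : Set G) := mul_normal A Z ▸ hg
  obtain ⟨a', ha', z', hz', rfl⟩ : h ∈ (A : Set G) * (Z : Set G) := mul_normal A Z ▸ hh
  have hcomm : ∀ {u v}, u ∈ Z → v ∈ A ⊔ Z → Commute u v := fun hu hv =>
    (mem_centralizer_iff.mp (hZ hu) _ hv).symm
  rw [commutatorElement_mul_left_of_commute (hcomm hz hh), ← commutatorElement_inv,
    commutatorElement_mul_left_of_commute (hcomm hz' (mem_sup_left ha)), commutatorElement_inv]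
  exact commutator_mem_commutator ha ha'

lemma isSimpleGroup_quotient_center {K : Type*} [Group K] (hK : center K ≠ ⊤)
    (h : ∀ N : Subgroup K, N.Normal → N ≤ center K ∨ N = ⊤) : IsSimpleGroup (K ⧸ center K) := by
  have := QuotientGroup.nontrivial_iff.mpr hK
  refine ⟨fun N hN => (h _ (hN.comap (QuotientGroup.mk' _))).imp (fun hle => ?_) (fun htop => ?_)⟩
  · rw [eq_bot_iff, ← map_comap_eq_self_of_surjective (QuotientGroup.mk'_surjective _) N,
      ← QuotientGroup.map_mk'_self (center K)]
    exact map_mono hle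
  · rw [← map_comap_eq_self_of_surjective (QuotientGroup.mk'_surjective _) N, htop,
      map_top_of_surjective _ (QuotientGroup.mk'_surjective _)]

lemma commutator_top_eq_top_iff (K : Subgroup G) :
    ⁅(⊤ : Subgroup K), (⊤ : Subgroup K)⁆ = ⊤ ↔ ⁅K, K⁆ = K := by
  rw [← (map_injective K.subtype_injective).eq_iff, ← commutator_def, map_subtype_commutator,
    ← MonoidHom.range_eq_map, range_subtype]

/-- A normal subgroup `N` of `⁅D, D⁆` has `NZ = Z`, so `N` is central, or `NZ = D`, so
`⁅D, D⁆ = ⁅N, N⁆ ≤ N`. -/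
theorem isComponent_commutator {Z D : Subgroup G} [Z.Normal] (hD : D.IsSubnormal) (hZD : Z < D)
    (hZ : Z ≤ centralizer (D : Set G))
    (hmin : ∀ M, Z ≤ M → M ≤ D → D ≤ normalizer (M : Set G) → M = Z ∨ M = D)
    (hKZ : ⁅D, D⁆ ⊔ Z = D) : ⁅D, D⁆.IsComponent := by
  set K := ⁅D, D⁆
  have hKD : K ≤ D := commutator_le_self D
  have hcomm : ∀ A : Subgroup G, A ⊔ Z = D → K ≤ ⁅A, A⁆ := fun A hA => by
    subst hA; exact commutator_sup_le_of_le_centralizer hZ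
  have hperf : ⁅K, K⁆ = K := le_antisymm (commutator_le_self K) (hcomm K hKZ)
  have hKne : K ≠ ⊥ := fun hK => hZD.ne (by rw [← hKZ, hK, bot_sup_eq])
  have hperf' := (commutator_top_eq_top_iff K).mpr hperf
  refine ⟨(hD.step K D hKD ((normal_subgroupOf_iff_le_normalizer hKD).mpr
    (normalizer_commutator_ge_left D D))).isSubnormalIn, hperf', ?_⟩
  refine isSimpleGroup_quotient_center (fun hc => hKne ?_) fun N hN => ?_
  · have htop : (⊤ : Subgroup K) = ⊥ :=
      hperf'.symm.trans (commutator_top_left_eq_bot_iff_le_center.mpr hc.ge)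
    rw [← range_subtype K, MonoidHom.range_eq_map, htop, Subgroup.map_bot]
  set N' := N.map K.subtype
  have hN'K : N' ≤ K := map_subtype_le N
  have hKN' : K ≤ normalizer (N' : Set G) := (normal_subgroupOf_iff_le_normalizer hN'K).mp <| by
    rwa [subgroupOf, comap_map_eq_self_of_injective K.subtype_injective]
  have hZN' : Z ≤ normalizer (N' : Set G) :=
    hZ.trans ((centralizer_le (hN'K.trans hKD)).trans (centralizer_le_normalizer _))
  have hDN : D ≤ normalizer ((N' ⊔ Z : Subgroup G) : Set G) :=
    hKZ.ge.trans <| (le_inf (sup_le hKN' hZN') (le_top.trans (normalizer_eq_top Z).ge)).trans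
      (normalizer_inf_normalizer_le_normalizer_sup _ _)
  rcases hmin (N' ⊔ Z) le_sup_right (sup_le (hN'K.trans hKD) hZD.le) hDN with h | h
  · refine .inl fun n hn => mem_center_iff.mpr fun k => Subtype.ext ?_
    exact mem_centralizer_iff.mp (hZ (h ▸ mem_sup_left ⟨n, hn, rfl⟩)) k (hKD k.2)
  · refine .inr (map_injective K.subtype_injective ?_)
    rw [← MonoidHom.range_eq_map, range_subtype]
    exact le_antisymm hN'K ((hcomm _ h).trans (commutator_le_self _))

end Component

theorem centralizer_fitting_le {G : Type*} [Group G] [Finite G] (hE : layer G = ⊥) :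
    centralizer (fitting G : Set G) ≤ fitting G := by
  set C := centralizer (fitting G : Set G)
  set Z := C ⊓ fitting G
  by_contra hCF
  have hZC : Z < C := inf_le_left.lt_of_ne fun h => hCF (h ▸ inf_le_right)
  have : Z.Normal := normal_inf_normal _ _
  obtain ⟨D, hDmin⟩ := Set.Finite.exists_minimal
    (s := {D : Subgroup G | D.IsSubnormal ∧ Z < D ∧ D ≤ C}) (Set.toFinite _)
    ⟨C, (inferInstance : C.Normal).isSubnormal, hZC, le_rfl⟩
  obtain ⟨hD, hZD, hDC⟩ := hDmin.prop
  have hZ : Z ≤ centralizer (D : Set G) :=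
    le_centralizer_iff.mpr (hDC.trans (centralizer_le inf_le_right))
  have hmin : ∀ M, Z ≤ M → M ≤ D → D ≤ normalizer (M : Set G) → M = Z ∨ M = D :=
    fun M hZM hMD hDM => hZM.eq_or_lt.imp Eq.symm fun hZM => hDmin.eq_of_le
      ⟨hD.step M D hMD ((normal_subgroupOf_iff_le_normalizer hMD).mpr hDM), hZM, hMD.trans hDC⟩ hMD
  have hDK : D ≤ normalizer ((⁅D, D⁆ ⊔ Z : Subgroup G) : Set G) :=
    (le_inf (normalizer_commutator_ge_left D D) (le_top.trans (normalizer_eq_top Z).ge)).trans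
      (normalizer_inf_normalizer_le_normalizer_sup _ _)
  rcases hmin _ le_sup_right (sup_le (commutator_le_self D) hZD.le) hDK with h | h
  · have := isNilpotent_of_commutator_le_centralizer ((le_sup_left.trans h.le).trans hZ)
    exact hZD.not_ge (le_inf hDC hD.le_fitting)
  · have hK : ⁅D, D⁆ ≤ layer G := fun x hx =>
      subset_closure ⟨_, isComponent_commutator hD hZD hZ hmin h, hx⟩
    rw [hE, le_bot_iff] at hK
    exact hZD.ne (by rw [← h, hK, bot_sup_eq])

/-- Let `X` be a finite group with `E(X) = 1`, and `I`, `J` subgroups of `X` such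
that `I·F(X)` and `J·F(X)` are nilpotent.  If `p` and `q` are distinct primes,
then `[O_p(I), O_q(J)] = 1`. -/
theorem commutator_pCore_qCore_eq_bot
    {X : Type*} [Group X] [Finite X] (hE : layer X = ⊥)
    (I J : Subgroup X)
    (hI : Group.IsNilpotent ↥(I ⊔ fitting X)) (hJ : Group.IsNilpotent ↥(J ⊔ fitting X))
    (p q : ℕ) (hp : p.Prime) (hq : q.Prime) (hpq : p ≠ q) :
    ⁅Subgroup.map I.subtype (pCore p I), Subgroup.map J.subtype (pCore q J)⁆ = ⊥ := by
  have := Fact.mk hp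
  have := Fact.mk hq
  have hpq' : p.Coprime q := (Nat.coprime_primes hp hq).mpr hpq
  rw [commutator_eq_bot_iff_le_centralizer]
  rintro _ ⟨a, ha, rfl⟩
  rw [mem_centralizer_iff]
  rintro _ ⟨b, hb, rfl⟩
  have hpa : IsPElement p (a : X) := isPElement_coe.mpr ((isPGroup_pCore p).isPElement ha)
  have hqb : IsPElement q (b : X) := isPElement_coe.mpr ((isPGroup_pCore q).isPElement hb)
  have hc : ⁅(a : X), (b : X)⁆ ∈ fitting X := centralizer_fitting_le hE <|
    commutatorElement_mem_centralizer
      (fun f hf hfp => hpa.commute_of_coprime_of_mem (mem_sup_left a.2) (mem_sup_right hf) hfp)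
      (fun f hf hfp => hqb.commute_of_coprime_of_mem (mem_sup_left b.2) (mem_sup_right hf)
        (hfp.coprime_orderOf hpq'))
  have hcp := hpa.commutatorElement_left (mem_sup_left a.2) (mem_sup_right hc)
  have hcq := hqb.commutatorElement_right (mem_sup_left b.2) (mem_sup_right hc)
  exact (commutatorElement_eq_one_iff_commute.mp (hcp.eq_one hcq hpq')).eq.symm
end
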